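/- arXiv:1901.09799 — 5 statements merged into one kernel-verified Lean document; each statement's English description precedes it below -/
import Mathlib

section
/- Let M be a real 3×3 matrix with det M > 0, set J = det M and form the Gram matrix g with entries g_{ij} = (M e_i) · (M e_j) for i,j ∈ {1,2}. Then J · ‖M⁻ᵀ e₃‖ = √(det g) = √(g₁₁ g₂₂ − g₁₂²). In particular, for a volume-preserving-oriented flow map η with a = (∂η)⁻¹ and boundary conormal N = e₃, one has J |aᵀ N| = √g, where g is the determinant of the metric induced on the image of the boundary by η. -/
/-!
By Cramer's rule the last row of `M⁻¹` is `(det M)⁻¹ (M e₁ × M e₂)`, so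
`J ‖M⁻ᵀ e₃‖ = ‖M e₁ × M e₂‖` once `J > 0`. Lagrange's identity
`‖u × v‖² = ‖u‖²‖v‖² − (u · v)²` identifies the right-hand side with the square root of the
Gram determinant of `M e₁, M e₂`.
-/

open Matrix

namespace Matrix

theorem inv_row_eq_inv_det_smul_adjugate_row {n K : Type*} [Fintype n] [DecidableEq n] [Field K]
    (M : Matrix n n K) (i : n) : M⁻¹ i = M.det⁻¹ • M.adjugate i := by
  rw [inv_def, Ring.inverse_eq_inv]
  rfl

theorem adjugate_fin_three_row_two {R : Type*} [CommRing R] (M : Matrix (Fin 3) (Fin 3) R) :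
    M.adjugate 2 = M.col 0 ⨯₃ M.col 1 := by
  ext j
  fin_cases j <;> simp [adjugate_fin_three, cross_apply] <;> ring

theorem det_fin_two_of_gram {R : Type*} [CommRing R] {m : Type*} [Fintype m]
    (v : Fin 2 → m → R) (g : Matrix (Fin 2) (Fin 2) R) (hg : ∀ i j, g i j = v i ⬝ᵥ v j) :
    g.det = g 0 0 * g 1 1 - g 0 1 ^ 2 := by
  rw [det_fin_two, hg 1 0, hg 0 1, dotProduct_comm (v 1)]
  ring

theorem det_fin_two_of_gram_eq_cross_dot_cross {R : Type*} [CommRing R]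
    (v : Fin 2 → Fin 3 → R) (g : Matrix (Fin 2) (Fin 2) R) (hg : ∀ i j, g i j = v i ⬝ᵥ v j) :
    g.det = v 0 ⨯₃ v 1 ⬝ᵥ v 0 ⨯₃ v 1 := by
  rw [det_fin_two_of_gram v g hg, cross_dot_cross, hg 0 0, hg 1 1, hg 0 1,
    dotProduct_comm (v 1) (v 0)]
  ring

end Matrix

theorem Real.sqrt_smul_dotProduct_smul {n : Type*} [Fintype n] {c : ℝ} (hc : 0 ≤ c)
    (x : n → ℝ) : Real.sqrt ((c • x) ⬝ᵥ (c • x)) = c * Real.sqrt (x ⬝ᵥ x) := by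
  rw [smul_dotProduct, dotProduct_smul, smul_smul, smul_eq_mul, ← sq,
    Real.sqrt_mul (sq_nonneg c), Real.sqrt_sq hc]

/-- **Area element identity** `J |aᵀN| = √g`. For a real `3×3` matrix `M` with
`det M > 0`, `J = det M`, and Gram matrix `g_{ij} = (M e_i)·(M e_j)` (`i,j ∈ {1,2}`), one
has `J · ‖M⁻ᵀ e₃‖ = √(det g) = √(g₁₁ g₂₂ − g₁₂²)`. -/
theorem area_element_identity (M : Matrix (Fin 3) (Fin 3) ℝ) (hdet : 0 < M.det)
    (g : Matrix (Fin 2) (Fin 2) ℝ)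
    (hg : ∀ i j : Fin 2, g i j =
      dotProduct (M.mulVec (Pi.single i.castSucc 1))
        (M.mulVec (Pi.single j.castSucc 1))) :
    M.det * Real.sqrt (dotProduct (fun α => M⁻¹ 2 α) (fun α => M⁻¹ 2 α))
        = Real.sqrt g.det ∧
      Real.sqrt g.det = Real.sqrt (g 0 0 * g 1 1 - g 0 1 ^ 2) := by
  have hgram : ∀ i j, g i j = M.col i.castSucc ⬝ᵥ M.col j.castSucc := by
    simpa only [mulVec_single_one] using hg
  have hcross : g.det = M.col 0 ⨯₃ M.col 1 ⬝ᵥ M.col 0 ⨯₃ M.col 1 :=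
    det_fin_two_of_gram_eq_cross_dot_cross (fun i => M.col i.castSucc) g hgram
  refine ⟨?_, congrArg Real.sqrt (det_fin_two_of_gram _ g hgram)⟩
  rw [inv_row_eq_inv_det_smul_adjugate_row, adjugate_fin_three_row_two,
    Real.sqrt_smul_dotProduct_smul (inv_nonneg.2 hdet.le), hcross, ← mul_assoc,
    mul_inv_cancel₀ hdet.ne', one_mul]
end

section
/- Let I ⊆ ℝ be an open interval, U ⊆ ℝ² open, and η : I × U → ℝ³ smooth with ∂₁η(t,y), ∂₂η(t,y) linearly independent for all (t,y); set v = ∂_tη, g_{ij} = ∂_iη · ∂_jη, (g^{ij}) the inverse metric, and n̂ = (∂₁η × ∂₂η)/‖∂₁η × ∂₂η‖. Then the time derivative of the unit normal satisfies ∂_t n̂_μ = −g^{kl} (∂_k v^τ n̂_τ) ∂_lη_μ for each μ ∈ {1,2,3} (summation over k,l ∈ {1,2} and τ ∈ {1,2,3}). -/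
open scoped BigOperators
open Matrix

section AuxLemmas
set_option maxHeartbeats 1600000 in
lemma key_alg (e0 e1 b0 b1 : Fin 3 → ℝ) (μ : Fin 3) :
    (crossProduct e0 e1 ⬝ᵥ crossProduct e0 e1) * (crossProduct b0 e1 + crossProduct e0 b1) μ
      - (crossProduct e0 e1 ⬝ᵥ (crossProduct b0 e1 + crossProduct e0 b1)) * crossProduct e0 e1 μ
    = -((e1 ⬝ᵥ e1) * (b0 ⬝ᵥ crossProduct e0 e1) * e0 μ
        - (e0 ⬝ᵥ e1) * (b0 ⬝ᵥ crossProduct e0 e1) * e1 μ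
        - (e1 ⬝ᵥ e0) * (b1 ⬝ᵥ crossProduct e0 e1) * e0 μ
        + (e0 ⬝ᵥ e0) * (b1 ⬝ᵥ crossProduct e0 e1) * e1 μ) := by
  revert μ
  simp only [cross_apply, dotProduct, Fin.sum_univ_three, Pi.add_apply, Matrix.cons_val_zero,
    Matrix.cons_val_one, Matrix.head_cons, Matrix.cons_val_two, Matrix.tail_cons,
    Fin.forall_fin_succ, Matrix.cons_val_succ, Fin.succ_zero_eq_one, Fin.succ_one_eq_two]
  refine ⟨by ring, by ring, by ring, fun i => i.elim0⟩

lemma lagrange (e0 e1 : Fin 3 → ℝ) :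
    (e0 ⬝ᵥ e0) * (e1 ⬝ᵥ e1) - (e0 ⬝ᵥ e1) * (e1 ⬝ᵥ e0)
      = crossProduct e0 e1 ⬝ᵥ crossProduct e0 e1 := by
  simp only [cross_apply, dotProduct, Fin.sum_univ_three, Matrix.cons_val_zero,
    Matrix.cons_val_one, Matrix.head_cons, Matrix.cons_val_two, Matrix.tail_cons]
  ring

lemma hasDerivAt_crossProduct {u v : ℝ → Fin 3 → ℝ} {u' v' : Fin 3 → ℝ} {t : ℝ}
    (hu : HasDerivAt u u' t) (hv : HasDerivAt v v' t) :
    HasDerivAt (fun s => crossProduct (u s) (v s))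
      (crossProduct u' (v t) + crossProduct (u t) v') t := by
  rw [hasDerivAt_pi] at hu hv ⊢
  intro i
  match i with
  | 0 =>
    simp only [cross_apply, Pi.add_apply, Matrix.cons_val_zero]
    exact ((((hu 1).mul (hv 2)).sub ((hu 2).mul (hv 1)))).congr_deriv (by ring)
  | 1 =>
    simp only [cross_apply, Pi.add_apply, Matrix.cons_val_one, Matrix.head_cons, Matrix.cons_val_zero]
    exact ((((hu 2).mul (hv 0)).sub ((hu 0).mul (hv 2)))).congr_deriv (by ring)
  | 2 =>
    simp only [cross_apply, Pi.add_apply, Matrix.cons_val_two, Matrix.tail_cons, Matrix.head_cons]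
    exact ((((hu 0).mul (hv 1)).sub ((hu 1).mul (hv 0)))).congr_deriv (by ring)

lemma hasDerivAt_dotv {u v : ℝ → Fin 3 → ℝ} {u' v' : Fin 3 → ℝ} {t : ℝ}
    (hu : HasDerivAt u u' t) (hv : HasDerivAt v v' t) :
    HasDerivAt (fun s => u s ⬝ᵥ v s) (u' ⬝ᵥ v t + u t ⬝ᵥ v') t := by
  rw [hasDerivAt_pi] at hu hv
  simp only [dotProduct, Fin.sum_univ_three]
  exact ((((hu 0).mul (hv 0)).add ((hu 1).mul (hv 1))).add
    (((hu 2).mul (hv 2)))).congr_deriv (by ring)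

end AuxLemmas

set_option maxHeartbeats 4000000 in
/-- **Time derivative of the unit normal:** `∂_t n̂_μ = −g^{kl} (∂_k v^τ n̂_τ) ∂_lη_μ`,
for a smooth time-dependent embedding `η : I × U → ℝ³` with `∂₁η, ∂₂η` linearly
independent, `v = ∂_tη`, induced metric `g_{ij} = ∂_iη · ∂_jη` with inverse `(g^{ij})`,
and unit normal `n̂ = (∂₁η × ∂₂η)/‖∂₁η × ∂₂η‖`. -/
theorem time_derivative_of_normal (a b : ℝ) (hab : a < b)
    (U : Set (Fin 2 → ℝ)) (hU : IsOpen U)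
    (η : ℝ → (Fin 2 → ℝ) → (Fin 3 → ℝ))
    (hη : ContDiffOn ℝ (⊤ : ℕ∞) (fun p : ℝ × (Fin 2 → ℝ) => η p.1 p.2) (Set.Ioo a b ×ˢ U))
    (hind : ∀ t ∈ Set.Ioo a b, ∀ y ∈ U,
      LinearIndependent ℝ (fun i : Fin 2 => fderiv ℝ (η t) y (Pi.single i 1)))
    (v : ℝ → (Fin 2 → ℝ) → (Fin 3 → ℝ))
    (hv : ∀ t y, v t y = deriv (fun s => η s y) t)
    (g : ℝ → (Fin 2 → ℝ) → Matrix (Fin 2) (Fin 2) ℝ)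
    (hg : ∀ t y i j, g t y i j = dotProduct
      (fderiv ℝ (η t) y (Pi.single i 1)) (fderiv ℝ (η t) y (Pi.single j 1)))
    (nhat : ℝ → (Fin 2 → ℝ) → Fin 3 → ℝ)
    (hn : ∀ t y, nhat t y =
      (Real.sqrt (dotProduct
        (crossProduct (fderiv ℝ (η t) y (Pi.single 0 1)) (fderiv ℝ (η t) y (Pi.single 1 1)))
        (crossProduct (fderiv ℝ (η t) y (Pi.single 0 1)) (fderiv ℝ (η t) y (Pi.single 1 1)))))⁻¹ •
      crossProduct (fderiv ℝ (η t) y (Pi.single 0 1)) (fderiv ℝ (η t) y (Pi.single 1 1))) :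
    ∀ t ∈ Set.Ioo a b, ∀ y ∈ U, ∀ μ,
      deriv (fun s => nhat s y μ) t =
        -∑ k, ∑ l, (g t y)⁻¹ k l *
          (∑ τ, fderiv ℝ (fun z => v t z τ) y (Pi.single k 1) * nhat t y τ) *
          fderiv ℝ (η t) y (Pi.single l 1) μ := by
  intro t ht y hy μ
  have hΩ : IsOpen (Set.Ioo a b ×ˢ U) := isOpen_Ioo.prod hU
  have hP : (t, y) ∈ Set.Ioo a b ×ˢ U := ⟨ht, hy⟩
  set F : ℝ × (Fin 2 → ℝ) → (Fin 3 → ℝ) := fun p => η p.1 p.2 with hFdef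
  set D : ℝ × (Fin 2 → ℝ) → (ℝ × (Fin 2 → ℝ)) →L[ℝ] (Fin 3 → ℝ) := fderiv ℝ F with hDdef
  have hD : ContDiffOn ℝ (⊤ : ℕ∞) D (Set.Ioo a b ×ˢ U) := hη.fderiv_of_isOpen hΩ (by simp)
  have hDP : HasFDerivAt D (fderiv ℝ D (t, y)) (t, y) :=
    ((hD.contDiffAt (hΩ.mem_nhds hP)).differentiableAt (by simp)).hasFDerivAt
  set D2 := fderiv ℝ D (t, y) with hD2def
  have hFd : ∀ p ∈ Set.Ioo a b ×ˢ U, HasFDerivAt F (D p) p := fun p hp =>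
    ((hη.contDiffAt (hΩ.mem_nhds hp)).differentiableAt (by simp)).hasFDerivAt
  -- spatial partial derivatives
  have hpart : ∀ s z, (s, z) ∈ Set.Ioo a b ×ˢ U → ∀ w : Fin 2 → ℝ,
      fderiv ℝ (η s) z w = D (s, z) (0, w) := by
    intro s z h w
    have h1 : HasFDerivAt (η s)
        ((D (s, z)).comp (ContinuousLinearMap.inr ℝ ℝ (Fin 2 → ℝ))) z :=
      (hFd (s, z) h).comp z (hasFDerivAt_prodMk_right s z)
    rw [h1.fderiv]
    simp
  -- time derivative
  have htime : ∀ s z, (s, z) ∈ Set.Ioo a b ×ˢ U →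
      HasDerivAt (fun s' => η s' z) (D (s, z) (1, 0)) s := fun s z h =>
    (hFd (s, z) h).comp_hasDerivAt (f := fun s' => (id s', z)) s ((hasDerivAt_id s).prodMk (hasDerivAt_const s z))
  set E : Fin 2 → ℝ → (Fin 3 → ℝ) := fun k s => D (s, y) (0, Pi.single k 1) with hEdef
  set B : Fin 2 → (Fin 3 → ℝ) := fun k => D2 (1, 0) (0, Pi.single k 1) with hBdef
  have hE : ∀ k, HasDerivAt (E k) (B k) t := by
    intro k
    have h1 : HasDerivAt (fun s => D (s, y)) (D2 (1, 0)) t :=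
      hDP.comp_hasDerivAt t ((hasDerivAt_id t).prodMk (hasDerivAt_const t y))
    have h2 := h1.clm_apply (hasDerivAt_const t (((0:ℝ), Pi.single k (1:ℝ)) : ℝ × (Fin 2 → ℝ)))
    simpa using h2
  have hsymm : ∀ w : Fin 2 → ℝ, D2 (0, w) (1, 0) = D2 (1, 0) (0, w) := by
    intro w
    exact ((hη.contDiffAt (hΩ.mem_nhds hP)).isSymmSndFDerivAt (by rw [minSmoothness_of_isRCLikeNormedField]; exact (WithTop.coe_le_coe.mpr le_top : ((2:ℕ∞) : WithTop ℕ∞) ≤ ((⊤ : ℕ∞) : WithTop ℕ∞)))) (0, w) (1, 0)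
  have hBv : ∀ (k : Fin 2) (τ : Fin 3),
      fderiv ℝ (fun z => v t z τ) y (Pi.single k 1) = B k τ := by
    intro k τ
    have hzy : HasFDerivAt (fun z : Fin 2 → ℝ => D (t, z))
        (D2.comp (ContinuousLinearMap.inr ℝ ℝ (Fin 2 → ℝ))) y :=
      hDP.comp y (hasFDerivAt_prodMk_right t y)
    have h2 := hzy.clm_apply (hasFDerivAt_const (((1:ℝ), (0 : Fin 2 → ℝ)) : ℝ × (Fin 2 → ℝ)) y)
    have h3 := (ContinuousLinearMap.proj (R := ℝ) (φ := fun _ : Fin 3 => ℝ) τ).hasFDerivAt.comp y h2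
    have h3' : HasFDerivAt (fun z => D (t, z) (1, 0) τ)
        ((ContinuousLinearMap.proj (R := ℝ) (φ := fun _ : Fin 3 => ℝ) τ).comp
          ((D (t, y)).comp 0 + (D2.comp (ContinuousLinearMap.inr ℝ ℝ (Fin 2 → ℝ))).flip
            (((1:ℝ), (0 : Fin 2 → ℝ)) : ℝ × (Fin 2 → ℝ)))) y := h3
    have heq : (fun z => v t z τ) =ᶠ[nhds y] (fun z => D (t, z) (1, 0) τ) := by
      filter_upwards [hU.mem_nhds hy] with z hz
      rw [hv t z, (htime t z ⟨ht, hz⟩).deriv]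
    rw [heq.fderiv_eq, h3'.fderiv]
    simp only [ContinuousLinearMap.comp_apply, ContinuousLinearMap.add_apply,
      ContinuousLinearMap.flip_apply, ContinuousLinearMap.inr_apply,
      ContinuousLinearMap.zero_apply, map_zero, zero_add, ContinuousLinearMap.proj_apply]
    rw [hsymm]
  have hfE : ∀ k : Fin 2, fderiv ℝ (η t) y (Pi.single k 1) = E k t := fun k => hpart t y hP _
  -- nonvanishing of the cross product
  have hNt : crossProduct (E 0 t) (E 1 t) ≠ 0 := by
    rw [crossProduct_ne_zero_iff_linearIndependent]
    have h := hind t ht y hy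
    have hfun : (fun i : Fin 2 => fderiv ℝ (η t) y (Pi.single i 1)) = ![E 0 t, E 1 t] := by
      funext i
      fin_cases i <;> simp [hfE]
    rwa [hfun] at h
  have hq0 : 0 < crossProduct (E 0 t) (E 1 t) ⬝ᵥ crossProduct (E 0 t) (E 1 t) := by
    have h1 : 0 ≤ crossProduct (E 0 t) (E 1 t) ⬝ᵥ crossProduct (E 0 t) (E 1 t) :=
      Finset.sum_nonneg fun i _ => mul_self_nonneg _
    exact h1.lt_of_ne (Ne.symm fun h => hNt (dotProduct_self_eq_zero.mp h))
  -- derivative of the cross product and its square norm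
  have hN : HasDerivAt (fun s => crossProduct (E 0 s) (E 1 s))
      (crossProduct (B 0) (E 1 t) + crossProduct (E 0 t) (B 1)) t :=
    hasDerivAt_crossProduct (hE 0) (hE 1)
  have hq : HasDerivAt (fun s => crossProduct (E 0 s) (E 1 s) ⬝ᵥ crossProduct (E 0 s) (E 1 s))
      ((crossProduct (B 0) (E 1 t) + crossProduct (E 0 t) (B 1)) ⬝ᵥ crossProduct (E 0 t) (E 1 t)
        + crossProduct (E 0 t) (E 1 t) ⬝ᵥ (crossProduct (B 0) (E 1 t) + crossProduct (E 0 t) (B 1))) t :=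
    hasDerivAt_dotv hN hN
  have hsq := (Real.hasDerivAt_sqrt hq0.ne').comp t hq
  have hroot : Real.sqrt (crossProduct (E 0 t) (E 1 t) ⬝ᵥ crossProduct (E 0 t) (E 1 t)) ≠ 0 :=
    (Real.sqrt_pos.mpr hq0).ne'
  have hinv := hsq.inv hroot
  have hmain := hinv.mul ((hasDerivAt_pi.1 hN) μ)
  have hev : (fun s => nhat s y μ) =ᶠ[nhds t]
      (fun s => (Real.sqrt (crossProduct (E 0 s) (E 1 s) ⬝ᵥ crossProduct (E 0 s) (E 1 s)))⁻¹
        * crossProduct (E 0 s) (E 1 s) μ) := by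
    filter_upwards [isOpen_Ioo.mem_nhds ht] with s hs
    rw [hn s y]
    simp only [hpart s y ⟨hs, hy⟩, Pi.smul_apply, smul_eq_mul]
    rfl
  have hmain' : HasDerivAt
      (fun s => (Real.sqrt (crossProduct (E 0 s) (E 1 s) ⬝ᵥ crossProduct (E 0 s) (E 1 s)))⁻¹
        * crossProduct (E 0 s) (E 1 s) μ)
      (-(1 / (2 * Real.sqrt (crossProduct (E 0 t) (E 1 t) ⬝ᵥ crossProduct (E 0 t) (E 1 t))) *
            ((crossProduct (B 0) (E 1 t) + crossProduct (E 0 t) (B 1)) ⬝ᵥ crossProduct (E 0 t) (E 1 t) +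
              crossProduct (E 0 t) (E 1 t) ⬝ᵥ (crossProduct (B 0) (E 1 t) + crossProduct (E 0 t) (B 1)))) /
          (Real.sqrt (crossProduct (E 0 t) (E 1 t) ⬝ᵥ crossProduct (E 0 t) (E 1 t))) ^ 2 *
          crossProduct (E 0 t) (E 1 t) μ +
        (Real.sqrt (crossProduct (E 0 t) (E 1 t) ⬝ᵥ crossProduct (E 0 t) (E 1 t)))⁻¹ *
          (crossProduct (B 0) (E 1 t) + crossProduct (E 0 t) (B 1)) μ) t := hmain
  rw [hev.deriv_eq, hmain'.deriv]
  -- now rewrite the right-hand side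
  have hdet : (g t y).det = crossProduct (E 0 t) (E 1 t) ⬝ᵥ crossProduct (E 0 t) (E 1 t) := by
    rw [Matrix.det_fin_two]
    simp only [hg, hfE]
    exact lagrange _ _
  have hginv : ∀ k l : Fin 2, (g t y)⁻¹ k l =
      (crossProduct (E 0 t) (E 1 t) ⬝ᵥ crossProduct (E 0 t) (E 1 t))⁻¹ *
        Matrix.adjugate (g t y) k l := by
    intro k l
    rw [Matrix.inv_def, hdet]
    simp [smul_eq_mul]
  have hnty : ∀ τ : Fin 3, nhat t y τ =
      (Real.sqrt (crossProduct (E 0 t) (E 1 t) ⬝ᵥ crossProduct (E 0 t) (E 1 t)))⁻¹ *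
        crossProduct (E 0 t) (E 1 t) τ := by
    intro τ
    rw [hn t y]
    simp only [hfE, Pi.smul_apply, smul_eq_mul]
  have hadj := Matrix.adjugate_fin_two (g t y)
  have hsumk : ∀ k : Fin 2, (∑ τ : Fin 3, B k τ *
      ((Real.sqrt (crossProduct (E 0 t) (E 1 t) ⬝ᵥ crossProduct (E 0 t) (E 1 t)))⁻¹ *
        crossProduct (E 0 t) (E 1 t) τ)) =
      (Real.sqrt (crossProduct (E 0 t) (E 1 t) ⬝ᵥ crossProduct (E 0 t) (E 1 t)))⁻¹ *
        (B k ⬝ᵥ crossProduct (E 0 t) (E 1 t)) := by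
    intro k
    simp only [dotProduct]
    rw [Finset.mul_sum]
    exact Finset.sum_congr rfl fun τ _ => by ring
  simp only [hBv, hnty, hfE, hsumk, hginv, hadj, Fin.sum_univ_two]
  simp only [Matrix.cons_val', Matrix.cons_val_zero, Matrix.cons_val_one, Matrix.head_cons,
    Matrix.empty_val', Matrix.cons_val_fin_one, Matrix.head_fin_const, Matrix.of_apply, hg, hfE]
  have hcomm : (crossProduct (B 0) (E 1 t) + crossProduct (E 0 t) (B 1)) ⬝ᵥ crossProduct (E 0 t) (E 1 t)
      = crossProduct (E 0 t) (E 1 t) ⬝ᵥ (crossProduct (B 0) (E 1 t) + crossProduct (E 0 t) (B 1)) :=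
    dotProduct_comm _ _
  rw [hcomm]
  have key := key_alg (E 0 t) (E 1 t) (B 0) (B 1) μ
  have hr2 : (Real.sqrt (crossProduct (E 0 t) (E 1 t) ⬝ᵥ crossProduct (E 0 t) (E 1 t))) ^ 2
      = crossProduct (E 0 t) (E 1 t) ⬝ᵥ crossProduct (E 0 t) (E 1 t) := Real.sq_sqrt hq0.le
  set Nt : Fin 3 → ℝ := crossProduct (E 0 t) (E 1 t) with hNtdef
  set W : Fin 3 → ℝ := crossProduct (B 0) (E 1 t) + crossProduct (E 0 t) (B 1) with hWdef
  set q2 : ℝ := Nt ⬝ᵥ Nt with hq2def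
  set d : ℝ := Nt ⬝ᵥ W with hddef
  set c0 : ℝ := B 0 ⬝ᵥ Nt with hc0def
  set c1 : ℝ := B 1 ⬝ᵥ Nt with hc1def
  set g00 : ℝ := E 0 t ⬝ᵥ E 0 t with hg00def
  set g01 : ℝ := E 0 t ⬝ᵥ E 1 t with hg01def
  set g10 : ℝ := E 1 t ⬝ᵥ E 0 t with hg10def
  set g11 : ℝ := E 1 t ⬝ᵥ E 1 t with hg11def
  set r : ℝ := Real.sqrt q2 with hrdef
  set x : ℝ := Nt μ with hxdef
  set w : ℝ := W μ with hwdef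
  set p0 : ℝ := E 0 t μ with hp0def
  set p1 : ℝ := E 1 t μ with hp1def
  have hrne : r ≠ 0 := hroot
  rw [← hr2] at key ⊢
  field_simp
  linear_combination 2 * key
end

section
/- Let U ⊆ ℝ² be open and η : U → ℝ³ smooth with ∂₁η(y), ∂₂η(y) linearly independent for every y; set g_{ij} = ∂_iη · ∂_jη, g = det(g_{ij}), and (g^{ij}) the inverse metric. Then for each k ∈ {1,2}, ∂_i(√g g^{ik}) = −√g g^{ij} g^{kl} ∂_i∂_jη^μ ∂_lη_μ (summation over i,j,l ∈ {1,2} and μ ∈ {1,2,3}). -/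
open scoped BigOperators
open Matrix


lemma key_alg0 (A B D t : ℝ) (c : Fin 2 → Fin 2 → Fin 2 → ℝ)
    (hc : ∀ i j l, c i j l = c j i l) (ht : 0 < t) (ht2 : t * t = A * D - B * B) :
    ((2 * c 0 1 1) * t⁻¹ + D * (-(t^2)⁻¹ * (1/(2*t)) * ((2*c 0 0 0)*D + A*(2*c 0 1 1) - 2*B*(c 0 0 1 + c 0 1 0))))
      + (-(c 1 1 0 + c 1 0 1) * t⁻¹ + (-B) * (-(t^2)⁻¹ * (1/(2*t)) * ((2*c 1 0 0)*D + A*(2*c 1 1 1) - 2*B*(c 1 0 1 + c 1 1 0))))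
    = -t * ((D/(t*t)) * (D/(t*t)) * c 0 0 0 + (D/(t*t)) * (-B/(t*t)) * c 0 0 1
        + (-B/(t*t)) * (D/(t*t)) * c 0 1 0 + (-B/(t*t)) * (-B/(t*t)) * c 0 1 1
        + ((-B/(t*t)) * (D/(t*t)) * c 1 0 0 + (-B/(t*t)) * (-B/(t*t)) * c 1 0 1
        + (A/(t*t)) * (D/(t*t)) * c 1 1 0 + (A/(t*t)) * (-B/(t*t)) * c 1 1 1)) := by
  rw [hc 1 0 0, hc 1 0 1]
  field_simp

  linear_combination (c 0 1 1 - c 1 1 0) * ht2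

lemma key_alg1 (A B D t : ℝ) (c : Fin 2 → Fin 2 → Fin 2 → ℝ)
    (hc : ∀ i j l, c i j l = c j i l) (ht : 0 < t) (ht2 : t * t = A * D - B * B) :
    (-(c 0 0 1 + c 0 1 0) * t⁻¹ + (-B) * (-(t^2)⁻¹ * (1/(2*t)) * ((2*c 0 0 0)*D + A*(2*c 0 1 1) - 2*B*(c 0 0 1 + c 0 1 0))))
      + ((2 * c 1 0 0) * t⁻¹ + A * (-(t^2)⁻¹ * (1/(2*t)) * ((2*c 1 0 0)*D + A*(2*c 1 1 1) - 2*B*(c 1 0 1 + c 1 1 0))))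
    = -t * ((D/(t*t)) * (-B/(t*t)) * c 0 0 0 + (D/(t*t)) * (A/(t*t)) * c 0 0 1
        + (-B/(t*t)) * (-B/(t*t)) * c 0 1 0 + (-B/(t*t)) * (A/(t*t)) * c 0 1 1
        + ((-B/(t*t)) * (-B/(t*t)) * c 1 0 0 + (-B/(t*t)) * (A/(t*t)) * c 1 0 1
        + (A/(t*t)) * (-B/(t*t)) * c 1 1 0 + (A/(t*t)) * (A/(t*t)) * c 1 1 1)) := by
  rw [hc 1 0 0, hc 1 0 1]
  field_simp

  linear_combination (c 0 1 0 - c 0 0 1) * ht2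


/-- **Divergence of the weighted inverse metric:**
`∂_i(√g g^{ik}) = −√g g^{ij} g^{kl} ∂_i∂_jη^μ ∂_lη_μ`, for a smooth embedding
`η : U → ℝ³` with `∂₁η, ∂₂η` linearly independent, induced metric
`g_{ij} = ∂_iη · ∂_jη`, `g = det(g_{ij})` and inverse metric `(g^{ij})`. -/
theorem divergence_weighted_inverse_metric (U : Set (Fin 2 → ℝ)) (hU : IsOpen U)
    (η : (Fin 2 → ℝ) → (Fin 3 → ℝ)) (hη : ContDiffOn ℝ (⊤ : ℕ∞) η U)
    (hind : ∀ y ∈ U,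
      LinearIndependent ℝ (fun i : Fin 2 => fderiv ℝ η y (Pi.single i 1)))
    (g : (Fin 2 → ℝ) → Matrix (Fin 2) (Fin 2) ℝ)
    (hg : ∀ y i j, g y i j = dotProduct
      (fderiv ℝ η y (Pi.single i 1)) (fderiv ℝ η y (Pi.single j 1))) :
    ∀ y ∈ U, ∀ k : Fin 2,
      (∑ i, fderiv ℝ (fun z => Real.sqrt (g z).det * (g z)⁻¹ i k) y (Pi.single i 1)) =
        -Real.sqrt (g y).det * ∑ i, ∑ j, ∑ l, (g y)⁻¹ i j * (g y)⁻¹ k l *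
          ∑ μ, fderiv ℝ (fun z => fderiv ℝ η z (Pi.single j 1) μ) y (Pi.single i 1) *
            fderiv ℝ η y (Pi.single l 1) μ := by
  intro y hy k
  have hyU : U ∈ nhds y := hU.mem_nhds hy
  have hηy : ContDiffAt ℝ (⊤ : ℕ∞) η y := hη.contDiffAt hyU
  have hf1 : ContDiffAt ℝ 1 (fderiv ℝ η) y := hηy.fderiv_right (WithTop.coe_le_coe.mpr le_top)
  have hf2 : HasFDerivAt (fderiv ℝ η) (fderiv ℝ (fderiv ℝ η) y) y :=
    (hf1.differentiableAt one_ne_zero).hasFDerivAt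
  have hsymm : ∀ v w, fderiv ℝ (fderiv ℝ η) y v w = fderiv ℝ (fderiv ℝ η) y w v :=
    hηy.isSymmSndFDerivAt (by rw [minSmoothness_of_isRCLikeNormedField]; exact WithTop.coe_le_coe.mpr le_top)
  set L : Fin 2 → Fin 3 → ((Fin 2 → ℝ) →L[ℝ] ℝ) := fun j μ =>
    ((ContinuousLinearMap.proj μ).comp
      ((ContinuousLinearMap.apply ℝ (Fin 3 → ℝ)) (Pi.single j 1))).comp
      (fderiv ℝ (fderiv ℝ η) y) with hLdef
  have hp : ∀ (j : Fin 2) (μ : Fin 3),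
      HasFDerivAt (fun z => fderiv ℝ η z (Pi.single j 1) μ) (L j μ) y := by
    intro j μ
    exact ((((ContinuousLinearMap.proj μ).comp
      ((ContinuousLinearMap.apply ℝ (Fin 3 → ℝ)) (Pi.single j 1)))).hasFDerivAt
      (x := fderiv ℝ η y)).comp y hf2
  have hLval : ∀ (i j : Fin 2) (μ : Fin 3), L j μ (Pi.single i 1)
      = fderiv ℝ (fun z => fderiv ℝ η z (Pi.single j 1) μ) y (Pi.single i 1) := by
    intro i j μ; rw [(hp j μ).fderiv]
  set C : Fin 2 → Fin 2 → Fin 2 → ℝ := fun i j l =>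
    ∑ μ, fderiv ℝ (fun z => fderiv ℝ η z (Pi.single j 1) μ) y (Pi.single i 1) *
      fderiv ℝ η y (Pi.single l 1) μ with hCdef
  have hCa : ∀ i j l : Fin 2, (∑ μ, fderiv ℝ (fun z => fderiv ℝ η z (Pi.single j 1) μ) y
      (Pi.single i 1) * fderiv ℝ η y (Pi.single l 1) μ) = C i j l := fun _ _ _ => rfl
  have hCsym : ∀ i j l, C i j l = C j i l := by
    intro i j l
    rw [hCdef]
    refine Finset.sum_congr rfl fun μ _ => ?_
    have h1 : ∀ a b : Fin 2, fderiv ℝ (fun z => fderiv ℝ η z (Pi.single b 1) μ) y (Pi.single a 1)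
        = fderiv ℝ (fderiv ℝ η) y (Pi.single a 1) (Pi.single b 1) μ := by
      intro a b; rw [(hp b μ).fderiv]; rfl
    rw [h1, h1, hsymm]
  have hDG : ∀ j l : Fin 2, ∃ D' : (Fin 2 → ℝ) →L[ℝ] ℝ,
      HasFDerivAt (fun z => g z j l) D' y ∧
      ∀ i, D' (Pi.single i 1) = C i j l + C i l j := by
    intro j l
    have hgfun : (fun z => g z j l) = (fun z =>
        ∑ μ, (fderiv ℝ η z (Pi.single j 1) μ) * (fderiv ℝ η z (Pi.single l 1) μ)) := by
      funext z; rw [hg]; rfl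
    refine ⟨∑ μ, ((fderiv ℝ η y (Pi.single j 1) μ) • L l μ
        + (fderiv ℝ η y (Pi.single l 1) μ) • L j μ), ?_, ?_⟩
    · rw [hgfun]
      exact HasFDerivAt.fun_sum fun μ _ => (hp j μ).mul (hp l μ)
    · intro i
      simp only [ContinuousLinearMap.coe_sum', Finset.sum_apply,
        ContinuousLinearMap.add_apply, ContinuousLinearMap.coe_smul', Pi.smul_apply,
        smul_eq_mul, hCdef, hLval]
      rw [Finset.sum_add_distrib, add_comm]
      congr 1 <;> exact Finset.sum_congr rfl fun μ _ => mul_comm _ _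
  choose DG hDGd hDGval using hDG
  -- positivity of the determinant
  have hBsym : g y 1 0 = g y 0 1 := by
    rw [hg, hg]; exact dotProduct_comm _ _
  have hpd : (g y).PosDef := by
    rw [Matrix.posDef_iff_dotProduct_mulVec]
    constructor
    · ext i j
      simp only [Matrix.conjTranspose_apply, star_trivial, hg]
      exact dotProduct_comm _ _
    · intro x hx
      have hQ : dotProduct (star x) ((g y) *ᵥ x) =
          ∑ μ : Fin 3, (x 0 * fderiv ℝ η y (Pi.single 0 1) μ
            + x 1 * fderiv ℝ η y (Pi.single 1 1) μ)
          * (x 0 * fderiv ℝ η y (Pi.single 0 1) μ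
            + x 1 * fderiv ℝ η y (Pi.single 1 1) μ) := by
        simp only [dotProduct, Matrix.mulVec, star_trivial, hg,
          Fin.sum_univ_two, Fin.sum_univ_three, Pi.star_apply]
        ring
      rw [hQ]
      have hwne : ∃ μ : Fin 3, (x 0 * fderiv ℝ η y (Pi.single 0 1) μ
          + x 1 * fderiv ℝ η y (Pi.single 1 1) μ) ≠ 0 := by
        by_contra hcon
        push_neg at hcon
        have hz : (∑ i : Fin 2, x i • (fun i : Fin 2 => fderiv ℝ η y (Pi.single i 1)) i) = 0 := by
          funext μ
          simpa [Fin.sum_univ_two] using hcon μ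
        have := Fintype.linearIndependent_iff.1 (hind y hy) x hz
        exact hx (funext fun i => this i)
      obtain ⟨μ0, hμ0⟩ := hwne
      refine Finset.sum_pos' (fun μ _ => mul_self_nonneg _) ⟨μ0, Finset.mem_univ _, ?_⟩
      exact mul_self_pos.mpr hμ0
  have hdet_pos : 0 < (g y).det := hpd.det_pos
  set t : ℝ := Real.sqrt ((g y).det) with htdef
  have ht : 0 < t := Real.sqrt_pos.2 hdet_pos
  have htt : (g y).det = t * t := (Real.mul_self_sqrt hdet_pos.le).symm
  have ht2 : t * t = g y 0 0 * g y 1 1 - g y 0 1 * g y 0 1 := by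
    rw [← htt, Matrix.det_fin_two, hBsym]
  -- derivative of the determinant function
  set Dδ : (Fin 2 → ℝ) →L[ℝ] ℝ := (g y 0 0 • DG 1 1 + g y 1 1 • DG 0 0)
      - (g y 0 1 • DG 1 0 + g y 1 0 • DG 0 1) with hDδdef
  have hδd : HasFDerivAt (fun z => g z 0 0 * g z 1 1 - g z 0 1 * g z 1 0) Dδ y :=
    ((hDGd 0 0).mul (hDGd 1 1)).sub ((hDGd 0 1).mul (hDGd 1 0))
  have hδval : ∀ i : Fin 2, Dδ (Pi.single i 1)
      = (2*C i 0 0) * g y 1 1 + g y 0 0 * (2*C i 1 1)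
        - 2 * g y 0 1 * (C i 0 1 + C i 1 0) := by
    intro i
    simp only [hDδdef, ContinuousLinearMap.sub_apply, ContinuousLinearMap.add_apply,
      ContinuousLinearMap.coe_smul', Pi.smul_apply, smul_eq_mul, hDGval, hBsym]
    ring
  -- eventual positivity
  have hδy : g y 0 0 * g y 1 1 - g y 0 1 * g y 1 0 = (g y).det := (Matrix.det_fin_two _).symm
  have hδypos : 0 < g y 0 0 * g y 1 1 - g y 0 1 * g y 1 0 := by rw [hδy]; exact hdet_pos
  have hev : ∀ᶠ z in nhds y, 0 < g z 0 0 * g z 1 1 - g z 0 1 * g z 1 0 := by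
    have hcont : ContinuousAt (fun z => g z 0 0 * g z 1 1 - g z 0 1 * g z 1 0) y :=
      (((hDGd 0 0).differentiableAt.continuousAt.mul
        (hDGd 1 1).differentiableAt.continuousAt).sub
        ((hDGd 0 1).differentiableAt.continuousAt.mul
        (hDGd 1 0).differentiableAt.continuousAt))
    have := hcont (Ioi_mem_nhds hδypos)
    exact this
  -- main step: derivative of sqrt(det) * inverse entry
  have step : ∀ (i k' : Fin 2) (a : (Fin 2 → ℝ) → ℝ) (a' : (Fin 2 → ℝ) →L[ℝ] ℝ),
      HasFDerivAt a a' y → (∀ z, (g z).adjugate i k' = a z) → ∀ v,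
      fderiv ℝ (fun z => Real.sqrt (g z).det * (g z)⁻¹ i k') y v
        = a' v * t⁻¹ + a y * (-(t^2)⁻¹ * (1/(2*t)) * Dδ v) := by
    intro i k' a a' ha hadj v
    have hEq : (fun z => Real.sqrt (g z).det * (g z)⁻¹ i k') =ᶠ[nhds y]
        (fun z => a z * (Real.sqrt (g z 0 0 * g z 1 1 - g z 0 1 * g z 1 0))⁻¹) := by
      filter_upwards [hev] with z hz
      have hdz : (g z).det = g z 0 0 * g z 1 1 - g z 0 1 * g z 1 0 := Matrix.det_fin_two _
      have hz0 : (g z).det ≠ 0 := by rw [hdz]; exact hz.ne'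
      have hsz : 0 < Real.sqrt (g z 0 0 * g z 1 1 - g z 0 1 * g z 1 0) := Real.sqrt_pos.2 hz
      rw [Matrix.inv_def, Ring.inverse_eq_inv', Matrix.smul_apply, hadj z, smul_eq_mul, hdz]
      rw [show g z 0 0 * g z 1 1 - g z 0 1 * g z 1 0
        = Real.sqrt (g z 0 0 * g z 1 1 - g z 0 1 * g z 1 0)
          * Real.sqrt (g z 0 0 * g z 1 1 - g z 0 1 * g z 1 0) from (Real.mul_self_sqrt hz.le).symm]
      field_simp
      rw [Real.sqrt_sq hsz.le]
    rw [Filter.EventuallyEq.fderiv_eq hEq]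
    have hsy : Real.sqrt (g y 0 0 * g y 1 1 - g y 0 1 * g y 1 0) = t := by rw [hδy]
    have hsqinv : HasDerivAt (fun u : ℝ => (Real.sqrt u)⁻¹)
        (-(1 / (2 * Real.sqrt (g y 0 0 * g y 1 1 - g y 0 1 * g y 1 0)))
          / (Real.sqrt (g y 0 0 * g y 1 1 - g y 0 1 * g y 1 0))^2)
        (g y 0 0 * g y 1 1 - g y 0 1 * g y 1 0) :=
      (Real.hasDerivAt_sqrt hδypos.ne').inv (by rw [hsy]; exact ht.ne')
    have hinv : HasFDerivAt (fun z => (Real.sqrt (g z 0 0 * g z 1 1 - g z 0 1 * g z 1 0))⁻¹)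
        ((-(1 / (2 * Real.sqrt (g y 0 0 * g y 1 1 - g y 0 1 * g y 1 0)))
          / (Real.sqrt (g y 0 0 * g y 1 1 - g y 0 1 * g y 1 0))^2) • Dδ) y :=
      hsqinv.comp_hasFDerivAt (h₂ := fun u : ℝ => (Real.sqrt u)⁻¹)
        (f := fun z => g z 0 0 * g z 1 1 - g z 0 1 * g z 1 0) y hδd
    have hprod : HasFDerivAt (fun z => a z * (Real.sqrt (g z 0 0 * g z 1 1 - g z 0 1 * g z 1 0))⁻¹)
        _ y := ha.mul hinv
    rw [hprod.fderiv]
    simp only [ContinuousLinearMap.add_apply, ContinuousLinearMap.coe_smul', Pi.smul_apply,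
      smul_eq_mul, hsy]
    field_simp
    ring
  -- inverse entries
  have hJ : ∀ i j, (g y)⁻¹ i j = (g y).adjugate i j / (t*t) := by
    intro i j
    rw [Matrix.inv_def, Ring.inverse_eq_inv', Matrix.smul_apply, smul_eq_mul,
      inv_mul_eq_div, htt]
  have hJ00 : (g y)⁻¹ 0 0 = g y 1 1 / (t*t) := by rw [hJ]; simp [Matrix.adjugate_fin_two]
  have hJ01 : (g y)⁻¹ 0 1 = -g y 0 1 / (t*t) := by rw [hJ]; simp [Matrix.adjugate_fin_two]
  have hJ10 : (g y)⁻¹ 1 0 = -g y 0 1 / (t*t) := by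
    rw [hJ]; simp [Matrix.adjugate_fin_two, hBsym]
  have hJ11 : (g y)⁻¹ 1 1 = g y 0 0 / (t*t) := by rw [hJ]; simp [Matrix.adjugate_fin_two]
  fin_cases k
  · simp only [Fin.zero_eta, Fin.mk_one, Fin.sum_univ_two, Fin.isValue]
    rw [step 0 0 (fun z => g z 1 1) (DG 1 1) (hDGd 1 1)
        (fun z => by simp [Matrix.adjugate_fin_two]) (Pi.single 0 1),
      step 1 0 (fun z => -(g z 1 0)) (-(DG 1 0)) ((hDGd 1 0).neg)
        (fun z => by simp [Matrix.adjugate_fin_two]) (Pi.single 1 1)]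
    simp only [ContinuousLinearMap.neg_apply, hDGval, hδval, hCa, hJ00, hJ01, hJ10, hJ11, hBsym]
    linear_combination key_alg0 (g y 0 0) (g y 0 1) (g y 1 1) t C hCsym ht ht2
  · simp only [Fin.zero_eta, Fin.mk_one, Fin.sum_univ_two, Fin.isValue]
    rw [step 0 1 (fun z => -(g z 0 1)) (-(DG 0 1)) ((hDGd 0 1).neg)
        (fun z => by simp [Matrix.adjugate_fin_two]) (Pi.single 0 1),
      step 1 1 (fun z => g z 0 0) (DG 0 0) (hDGd 0 0)
        (fun z => by simp [Matrix.adjugate_fin_two]) (Pi.single 1 1)]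
    simp only [ContinuousLinearMap.neg_apply, hDGval, hδval, hCa, hJ00, hJ01, hJ10, hJ11, hBsym]
    linear_combination key_alg1 (g y 0 0) (g y 0 1) (g y 1 1) t C hCsym ht ht2
end

section
/- (Compressible Cauchy invariance.) Let Ω ⊆ ℝ³ be open, T > 0, and let η, v : [0,T] × Ω → ℝ³ and R, q : [0,T] × Ω → ℝ be smooth with η(0,·) = id, ∂_tη = v, R > 0 everywhere, the spatial Jacobian ∂η invertible everywhere, and a = (∂η)⁻¹. Suppose the Lagrangian momentum equation R ∂_t v^α + a^{μα} ∂_μ q = 0 holds on [0,T] × Ω for every α. Then for every t ∈ [0,T], y ∈ Ω, and α ∈ {1,2,3}: ε^{αβγ} ∂_β v^μ(t,y) ∂_γ η_μ(t,y) = ω₀^α(y) + ∫₀ᵗ ε^{αβγ} a^{λμ}(s,y) ∂_λ q(s,y) ∂_γ η_μ(s,y) (∂_β R(s,y))/R(s,y)² ds, where ω₀^α = ε^{αβγ} ∂_β v^γ(0,·) is the initial vorticity (summation over repeated indices). -/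
open scoped BigOperators

/-- The totally antisymmetric Levi-Civita symbol on `Fin 3`, with `eps 0 1 2 = 1`. -/
noncomputable def eps (a b c : Fin 3) : ℝ :=
  (((b : ℕ) : ℝ) - ((a : ℕ) : ℝ)) * (((c : ℕ) : ℝ) - ((a : ℕ) : ℝ)) *
    (((c : ℕ) : ℝ) - ((b : ℕ) : ℝ)) / 2

/-- Partial derivative in the `μ`-th coordinate direction of a scalar function on `ℝ³`. -/
noncomputable def pd (f : (Fin 3 → ℝ) → ℝ) (μ : Fin 3) (y : Fin 3 → ℝ) : ℝ :=
  fderiv ℝ f y (Pi.single μ 1)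

namespace CCI

open Set Filter

abbrev E3 : Type := Fin 3 → ℝ

lemma eps_swap (a b c : Fin 3) : eps a c b = - eps a b c := by
  simp only [eps]; ring

lemma eps_diag (a b : Fin 3) : eps a b b = 0 := by
  simp [eps]

lemma eps_contract (α : Fin 3) (f : Fin 3 → Fin 3 → ℝ)
    (hf : ∀ β γ, f β γ = f γ β) :
    (∑ β, ∑ γ, eps α β γ * f β γ) = 0 := by
  have h10 : eps α 1 0 = -eps α 0 1 := eps_swap α 0 1
  have h20 : eps α 2 0 = -eps α 0 2 := eps_swap α 0 2
  have h21 : eps α 2 1 = -eps α 1 2 := eps_swap α 1 2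
  simp only [Fin.sum_univ_three, eps_diag, h10, h20, h21, hf 1 0, hf 2 0, hf 2 1]
  ring

lemma pd_congr {f g : E3 → ℝ} {y : E3} (h : f =ᶠ[nhds y] g) (β : Fin 3) :
    pd f β y = pd g β y := by
  unfold pd; rw [h.fderiv_eq]

lemma hasFDerivAt_incl (s : ℝ) (y : E3) :
    HasFDerivAt (fun z : E3 => (s, z))
      ((0 : E3 →L[ℝ] ℝ).prod (ContinuousLinearMap.id ℝ E3)) y :=
  (hasFDerivAt_const s y).prodMk (hasFDerivAt_id y)

lemma pd_slice {f : ℝ × E3 → ℝ} {s : ℝ} {y : E3} (h : DifferentiableAt ℝ f (s, y)) (β : Fin 3) :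
    pd (fun z => f (s, z)) β y = fderiv ℝ f (s, y) (0, Pi.single β 1) := by
  have hc := h.hasFDerivAt.comp y (hasFDerivAt_incl s y)
  unfold pd
  rw [show (fun z => f (s, z)) = f ∘ Prod.mk s from rfl, hc.fderiv]
  simp


lemma pd_slice_within {f : ℝ × E3 → ℝ} {f' : ℝ × E3 →L[ℝ] ℝ} {S : Set ℝ} {U : Set E3}
    (hU : IsOpen U) {s : ℝ} {y : E3} (hs : s ∈ S) (hy : y ∈ U)
    (h : HasFDerivWithinAt f f' (S ×ˢ U) (s, y)) (β : Fin 3) :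
    pd (fun z => f (s, z)) β y = f' (0, Pi.single β 1) := by
  have hmaps : Set.MapsTo (fun z : E3 => (s, z)) U (S ×ˢ U) := fun z hz => ⟨hs, hz⟩
  have hc := h.comp y ((hasFDerivAt_incl s y).hasFDerivWithinAt) hmaps
  have hc' : HasFDerivAt (f ∘ fun z => (s, z))
      (f'.comp ((0 : E3 →L[ℝ] ℝ).prod (ContinuousLinearMap.id ℝ E3))) y :=
    hc.hasFDerivAt (hU.mem_nhds hy)
  unfold pd
  rw [show (fun z => f (s, z)) = f ∘ (fun z => (s, z)) from rfl, hc'.fderiv]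
  simp

lemma contOn_pd {f : ℝ × E3 → ℝ} {T : ℝ} (hT : 0 < T) {U : Set E3} (hU : IsOpen U)
    (hf : ContDiffOn ℝ (⊤ : ℕ∞) f (Icc 0 T ×ˢ U)) {y : E3} (hy : y ∈ U) (β : Fin 3) :
    ContinuousOn (fun s => pd (fun z => f (s, z)) β y) (Icc 0 T) := by
  have hud : UniqueDiffOn ℝ ((Icc (0:ℝ) T) ×ˢ U) :=
    (uniqueDiffOn_Icc hT).prod hU.uniqueDiffOn
  have hcont := hf.continuousOn_fderivWithin hud (by simp)
  have hpath : ContinuousOn (fun s : ℝ => (s, y)) (Icc 0 T) :=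
    (continuous_id.prodMk continuous_const).continuousOn
  have hmaps : Set.MapsTo (fun s : ℝ => (s, y)) (Icc 0 T) ((Icc (0:ℝ) T) ×ˢ U) :=
    fun s hs => ⟨hs, hy⟩
  have hc2 : ContinuousOn
      (fun s => fderivWithin ℝ f ((Icc (0:ℝ) T) ×ˢ U) (s, y) (0, Pi.single β 1)) (Icc 0 T) :=
    (hcont.comp hpath hmaps).clm_apply continuousOn_const
  apply hc2.congr
  intro s hs
  exact pd_slice_within hU hs hy
    ((hf.differentiableOn (by simp) (s, y) ⟨hs, hy⟩).hasFDerivWithinAt) β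


lemma hasDerivAt_pd_swap {f : ℝ × E3 → ℝ} {t : ℝ} {y : E3}
    (h : ContDiffAt ℝ (⊤ : ℕ∞) f (t, y)) (β : Fin 3) :
    HasDerivAt (fun s => pd (fun z => f (s, z)) β y)
      (pd (fun z => deriv (fun s => f (s, z)) t) β y) t := by
  set F' := fderiv ℝ f with hF'def
  have hF' : ContDiffAt ℝ (⊤ : ℕ∞) F' (t, y) := h.fderiv_right (by simp)
  have hdiff : ∀ᶠ p in nhds (t, y), DifferentiableAt ℝ f p :=
    ((h.of_le (by exact_mod_cast (le_top : (1 : ℕ∞) ≤ ⊤) : (1 : WithTop ℕ∞) ≤ ((⊤ : ℕ∞) : WithTop ℕ∞))).eventually (by simp)).mono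
      (fun p hp => hp.differentiableAt one_ne_zero)
  set f'' := fderiv ℝ F' (t, y) with hf''def
  have hF'' : HasFDerivAt F' f'' (t, y) :=
    (hF'.differentiableAt (by simp)).hasFDerivAt
  have hsymm : ∀ v w, f'' v w = f'' w v :=
    second_derivative_symmetric_of_eventually
      (hdiff.mono fun p hp => hp.hasFDerivAt) hF''
  -- the function s ↦ F'(s,y)(0,e) has the right derivative
  have happly := (ContinuousLinearMap.apply ℝ ℝ ((0 : ℝ), Pi.single β (1:ℝ))).hasFDerivAt
    (x := F' (t, y))
  have hk : HasFDerivAt (fun p : ℝ × E3 => F' p (0, Pi.single β 1))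
      ((ContinuousLinearMap.apply ℝ ℝ ((0 : ℝ), Pi.single β (1:ℝ))).comp f'') (t, y) :=
    happly.comp (t, y) hF''
  have hpath : HasDerivAt (fun s : ℝ => (s, y)) ((1 : ℝ), (0 : E3)) t :=
    (hasDerivAt_id t).prodMk (hasDerivAt_const t y)
  have hg : HasDerivAt (fun s : ℝ => F' (s, y) (0, Pi.single β 1))
      (f'' (1, 0) (0, Pi.single β 1)) t := by
    have := hk.comp_hasDerivAt t hpath
    simpa [Function.comp_def] using this
  -- our function agrees with it near t
  have heq : (fun s => pd (fun z => f (s, z)) β y)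
      =ᶠ[nhds t] (fun s : ℝ => F' (s, y) (0, Pi.single β 1)) := by
    have htd : Filter.Tendsto (fun s : ℝ => (s, y)) (nhds t) (nhds (t, y)) :=
      (continuous_id.prodMk continuous_const).tendsto t
    filter_upwards [htd.eventually hdiff] with s hs
    exact pd_slice hs β
  have hmain : HasDerivAt (fun s => pd (fun z => f (s, z)) β y)
      (f'' (1, 0) (0, Pi.single β 1)) t := hg.congr_of_eventuallyEq heq
  -- identify the claimed derivative value
  have hval : pd (fun z => deriv (fun s => f (s, z)) t) β y
      = f'' (0, Pi.single β 1) (1, 0) := by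
    have heq2 : (fun z => deriv (fun s => f (s, z)) t)
        =ᶠ[nhds y] (fun z => F' (t, z) (1, 0)) := by
      have htd : Filter.Tendsto (fun z : E3 => (t, z)) (nhds y) (nhds (t, y)) :=
        (continuous_const.prodMk continuous_id).tendsto y
      filter_upwards [htd.eventually hdiff] with z hz
      have : HasDerivAt (fun s => f (s, z)) (F' (t, z) (1, 0)) t := by
        have hp : HasDerivAt (fun s : ℝ => (s, z)) ((1 : ℝ), (0 : E3)) t :=
          (hasDerivAt_id t).prodMk (hasDerivAt_const t z)
        have := hz.hasFDerivAt.comp_hasDerivAt t hp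
        simpa [Function.comp_def] using this
      exact this.deriv
    rw [pd_congr heq2 β]
    have hk2 : HasFDerivAt ((fun p : ℝ × E3 => F' p ((1:ℝ), (0:E3))) ∘ (fun z : E3 => (t, z)))
        (((ContinuousLinearMap.apply ℝ ℝ ((1 : ℝ), (0 : E3))).comp f'').comp
          ((0 : E3 →L[ℝ] ℝ).prod (ContinuousLinearMap.id ℝ E3))) y := by
      have ha := (ContinuousLinearMap.apply ℝ ℝ ((1 : ℝ), (0:E3))).hasFDerivAt
        (x := F' (t, y))
      exact (ha.comp (t,y) hF'').comp y (hasFDerivAt_incl t y)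
    unfold pd
    rw [show (fun z : E3 => F' (t, z) ((1:ℝ), (0:E3)))
        = (fun p : ℝ × E3 => F' p ((1:ℝ), (0:E3))) ∘ (fun z : E3 => (t, z)) from rfl]
    rw [hk2.fderiv]
    simp
  rw [hval, hsymm]
  exact hmain


lemma pd_pd_symm {g : E3 → ℝ} {y : E3} (h : ContDiffAt ℝ (⊤ : ℕ∞) g y) (β γ : Fin 3) :
    pd (fun z => pd g γ z) β y = pd (fun z => pd g β z) γ y := by
  set F' := fderiv ℝ g with hF'def
  have hF' : ContDiffAt ℝ (⊤ : ℕ∞) F' y := h.fderiv_right (by simp)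
  have hdiff : ∀ᶠ z in nhds y, DifferentiableAt ℝ g z :=
    ((h.of_le (by exact_mod_cast (le_top : (1 : ℕ∞) ≤ ⊤) : (1 : WithTop ℕ∞) ≤ ((⊤ : ℕ∞) : WithTop ℕ∞))).eventually (by simp)).mono
      (fun z hz => hz.differentiableAt one_ne_zero)
  set g'' := fderiv ℝ F' y with hg''def
  have hF'' : HasFDerivAt F' g'' y := (hF'.differentiableAt (by simp)).hasFDerivAt
  have hsymm : ∀ v w, g'' v w = g'' w v :=
    second_derivative_symmetric_of_eventually
      (hdiff.mono fun z hz => hz.hasFDerivAt) hF''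
  have key : ∀ b c : Fin 3,
      pd (fun z => pd g c z) b y = g'' (Pi.single b 1) (Pi.single c 1) := by
    intro b c
    have hk : HasFDerivAt (fun z : E3 => F' z (Pi.single c (1:ℝ)))
        ((ContinuousLinearMap.apply ℝ ℝ (Pi.single c (1:ℝ))).comp g'') y := by
      have ha := (ContinuousLinearMap.apply ℝ ℝ (Pi.single c (1:ℝ))).hasFDerivAt (x := F' y)
      exact ha.comp y hF''
    have : pd (fun z => pd g c z) b y
        = fderiv ℝ (fun z : E3 => F' z (Pi.single c (1:ℝ))) y (Pi.single b 1) := rfl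
    rw [this, hk.fderiv]
    simp
  rw [key β γ, key γ β, hsymm]


lemma contDiffAt_det3 {M : E3 → Matrix (Fin 3) (Fin 3) ℝ} {y : E3}
    (hM : ∀ i j, ContDiffAt ℝ (⊤ : ℕ∞) (fun z => M z i j) y) :
    ContDiffAt ℝ (⊤ : ℕ∞) (fun z => (M z).det) y := by
  have : (fun z => (M z).det) = fun z =>
      M z 0 0 * M z 1 1 * M z 2 2 - M z 0 0 * M z 1 2 * M z 2 1
        - M z 0 1 * M z 1 0 * M z 2 2 + M z 0 1 * M z 1 2 * M z 2 0
        + M z 0 2 * M z 1 0 * M z 2 1 - M z 0 2 * M z 1 1 * M z 2 0 := by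
    funext z; rw [Matrix.det_fin_three]
  rw [this]
  exact (((((((hM 0 0).mul (hM 1 1)).mul (hM 2 2)).sub
    (((hM 0 0).mul (hM 1 2)).mul (hM 2 1))).sub
    (((hM 0 1).mul (hM 1 0)).mul (hM 2 2))).add
    (((hM 0 1).mul (hM 1 2)).mul (hM 2 0))).add
    (((hM 0 2).mul (hM 1 0)).mul (hM 2 1))).sub
    (((hM 0 2).mul (hM 1 1)).mul (hM 2 0))

lemma contDiffAt_adj3 {M : E3 → Matrix (Fin 3) (Fin 3) ℝ} {y : E3}
    (hM : ∀ i j, ContDiffAt ℝ (⊤ : ℕ∞) (fun z => M z i j) y) (i j : Fin 3) :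
    ContDiffAt ℝ (⊤ : ℕ∞) (fun z => (M z).adjugate i j) y := by
  have : (fun z => (M z).adjugate i j)
      = fun z => ((M z).updateRow j (Pi.single i 1)).det := by
    funext z; rw [Matrix.adjugate_apply]
  rw [this]
  apply contDiffAt_det3
  intro k l
  by_cases hkj : k = j
  · subst hkj
    simp only [Matrix.updateRow_self]
    exact contDiffAt_const
  · simp only [Matrix.updateRow_apply, hkj, if_false]
    exact hM k l

lemma contDiffAt_inv3 {M : E3 → Matrix (Fin 3) (Fin 3) ℝ} {y : E3}
    (hM : ∀ i j, ContDiffAt ℝ (⊤ : ℕ∞) (fun z => M z i j) y)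
    (hdet : (M y).det ≠ 0) (i j : Fin 3) :
    ContDiffAt ℝ (⊤ : ℕ∞) (fun z => (M z)⁻¹ i j) y := by
  have : (fun z => (M z)⁻¹ i j) = fun z => ((M z).det)⁻¹ * (M z).adjugate i j := by
    funext z
    rw [Matrix.inv_def, Matrix.smul_apply, Ring.inverse_eq_inv, smul_eq_mul]
  rw [this]
  exact ((contDiffAt_det3 hM).inv hdet).mul (contDiffAt_adj3 hM i j)

lemma contOn_det3 {X : Type*} [TopologicalSpace X] {M : X → Matrix (Fin 3) (Fin 3) ℝ} {S : Set X}
    (hM : ∀ i j, ContinuousOn (fun x => M x i j) S) :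
    ContinuousOn (fun x => (M x).det) S := by
  have : (fun x => (M x).det) = fun x =>
      M x 0 0 * M x 1 1 * M x 2 2 - M x 0 0 * M x 1 2 * M x 2 1
        - M x 0 1 * M x 1 0 * M x 2 2 + M x 0 1 * M x 1 2 * M x 2 0
        + M x 0 2 * M x 1 0 * M x 2 1 - M x 0 2 * M x 1 1 * M x 2 0 := by
    funext x; rw [Matrix.det_fin_three]
  rw [this]
  exact (((((((hM 0 0).mul (hM 1 1)).mul (hM 2 2)).sub
    (((hM 0 0).mul (hM 1 2)).mul (hM 2 1))).sub
    (((hM 0 1).mul (hM 1 0)).mul (hM 2 2))).add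
    (((hM 0 1).mul (hM 1 2)).mul (hM 2 0))).add
    (((hM 0 2).mul (hM 1 0)).mul (hM 2 1))).sub
    (((hM 0 2).mul (hM 1 1)).mul (hM 2 0))

lemma contOn_inv3 {X : Type*} [TopologicalSpace X] {M : X → Matrix (Fin 3) (Fin 3) ℝ} {S : Set X}
    (hM : ∀ i j, ContinuousOn (fun x => M x i j) S)
    (hdet : ∀ x ∈ S, (M x).det ≠ 0) (i j : Fin 3) :
    ContinuousOn (fun x => (M x)⁻¹ i j) S := by
  have : (fun x => (M x)⁻¹ i j) = fun x => ((M x).det)⁻¹ * (M x).adjugate i j := by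
    funext x
    rw [Matrix.inv_def, Matrix.smul_apply, Ring.inverse_eq_inv, smul_eq_mul]
  rw [this]
  refine ContinuousOn.mul ((contOn_det3 hM).inv₀ hdet) ?_
  have : (fun x => (M x).adjugate i j)
      = fun x => ((M x).updateRow j (Pi.single i 1)).det := by
    funext x; rw [Matrix.adjugate_apply]
  rw [this]
  apply contOn_det3
  intro k l
  by_cases hkj : k = j
  · subst hkj
    simp only [Matrix.updateRow_self]
    exact continuousOn_const
  · simp only [Matrix.updateRow_apply, hkj, if_false]
    exact hM k l


lemma slice_contDiffAt {F : Type*} [NormedAddCommGroup F] [NormedSpace ℝ F]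
    {T : ℝ} {U : Set E3} (hU : IsOpen U) {f : ℝ × E3 → F}
    (hf : ContDiffOn ℝ (⊤ : ℕ∞) f (Icc 0 T ×ˢ U)) {s : ℝ} (hs : s ∈ Icc 0 T) {z : E3} (hz : z ∈ U) :
    ContDiffAt ℝ (⊤ : ℕ∞) (fun w => f (s, w)) z := by
  have hincl : ContDiffOn ℝ (⊤ : ℕ∞) (fun w : E3 => (s, w)) U :=
    (contDiff_const.prodMk contDiff_id).contDiffOn
  exact (hf.comp hincl (fun w hw => ⟨hs, hw⟩)).contDiffAt (hU.mem_nhds hz)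

end CCI



open CCI Set

/-- **Compressible Cauchy invariance.** For smooth `η, v, R, q` on `[0,T] × Ω` with
`η(0,·) = id`, `∂_tη = v`, `R > 0`, invertible spatial Jacobian `∂η`, `a = (∂η)⁻¹`, and
the Lagrangian momentum equation `R ∂_t v^α + a^{μα} ∂_μ q = 0`, one has
`ε^{αβγ} ∂_β v^μ ∂_γ η_μ = ω₀^α + ∫₀ᵗ ε^{αβγ} a^{λμ} ∂_λ q ∂_γ η_μ (∂_β R)/R² ds`,
where `ω₀^α = ε^{αβγ} ∂_β v^γ(0,·)` is the initial vorticity. -/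
theorem compressible_cauchy_invariance (Ω : Set (Fin 3 → ℝ)) (hΩ : IsOpen Ω)
    (T : ℝ) (hT : 0 < T)
    (η v : ℝ → (Fin 3 → ℝ) → (Fin 3 → ℝ)) (R q : ℝ → (Fin 3 → ℝ) → ℝ)
    (hη : ContDiffOn ℝ (⊤ : ℕ∞) (fun p : ℝ × (Fin 3 → ℝ) => η p.1 p.2) (Set.Icc 0 T ×ˢ Ω))
    (hvsm : ContDiffOn ℝ (⊤ : ℕ∞) (fun p : ℝ × (Fin 3 → ℝ) => v p.1 p.2) (Set.Icc 0 T ×ˢ Ω))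
    (hRsm : ContDiffOn ℝ (⊤ : ℕ∞) (fun p : ℝ × (Fin 3 → ℝ) => R p.1 p.2) (Set.Icc 0 T ×ˢ Ω))
    (hqsm : ContDiffOn ℝ (⊤ : ℕ∞) (fun p : ℝ × (Fin 3 → ℝ) => q p.1 p.2) (Set.Icc 0 T ×ˢ Ω))
    (hη0 : ∀ y ∈ Ω, η 0 y = y)
    (hv : ∀ t ∈ Set.Icc (0 : ℝ) T, ∀ y ∈ Ω, deriv (fun s => η s y) t = v t y)
    (hRpos : ∀ t ∈ Set.Icc (0 : ℝ) T, ∀ y ∈ Ω, 0 < R t y)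
    (Jac : ℝ → (Fin 3 → ℝ) → Matrix (Fin 3) (Fin 3) ℝ)
    (hJac : ∀ t y α μ, Jac t y α μ = fderiv ℝ (η t) y (Pi.single μ 1) α)
    (hinv : ∀ t ∈ Set.Icc (0 : ℝ) T, ∀ y ∈ Ω, IsUnit (Jac t y).det)
    (hmom : ∀ t ∈ Set.Icc (0 : ℝ) T, ∀ y ∈ Ω, ∀ α,
      R t y * deriv (fun s => v s y α) t +
        ∑ μ, (Jac t y)⁻¹ μ α * pd (q t) μ y = 0) :
    ∀ t ∈ Set.Icc (0 : ℝ) T, ∀ y ∈ Ω, ∀ α,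
      (∑ β, ∑ γ, ∑ μ, eps α β γ * pd (fun z => v t z μ) β y * pd (fun z => η t z μ) γ y)
        = (∑ β, ∑ γ, eps α β γ * pd (fun z => v 0 z γ) β y)
          + ∫ s in (0 : ℝ)..t, ∑ β, ∑ γ, ∑ lam, ∑ μ,
              eps α β γ * (Jac s y)⁻¹ lam μ * pd (q s) lam y *
                pd (fun z => η s z μ) γ y * (pd (R s) β y / (R s y) ^ 2) := by
  intro t ht y hy α
  obtain ⟨ht0, htT⟩ := ht
  have hyn : Ω ∈ nhds y := hΩ.mem_nhds hy
  -- component joint smoothness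
  have hηc : ∀ i, ContDiffOn ℝ (⊤ : ℕ∞) (fun p : ℝ × E3 => η p.1 p.2 i) (Icc 0 T ×ˢ Ω) :=
    fun i => ((ContinuousLinearMap.proj i : E3 →L[ℝ] ℝ).contDiff).comp_contDiffOn hη
  have hvc : ∀ i, ContDiffOn ℝ (⊤ : ℕ∞) (fun p : ℝ × E3 => v p.1 p.2 i) (Icc 0 T ×ˢ Ω) :=
    fun i => ((ContinuousLinearMap.proj i : E3 →L[ℝ] ℝ).contDiff).comp_contDiffOn hvsm
  -- Jacobian entries as partial derivatives
  have hJac' : ∀ s ∈ Icc (0:ℝ) T, ∀ z ∈ Ω, ∀ i k : Fin 3,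
      Jac s z i k = pd (fun w => η s w i) k z := by
    intro s hs z hz i k
    rw [hJac]
    have hd : DifferentiableAt ℝ (fun w => η s w) z :=
      (slice_contDiffAt hΩ hη hs hz).differentiableAt (by simp)
    have hc := ((ContinuousLinearMap.proj i : E3 →L[ℝ] ℝ).hasFDerivAt
      (x := η s z)).comp z hd.hasFDerivAt
    unfold pd
    rw [show (fun w => η s w i) = (⇑(ContinuousLinearMap.proj i : E3 →L[ℝ] ℝ)) ∘ (fun w => η s w)
      from rfl, hc.fderiv]
    simp
  -- the curl-type quantity and the integrand
  show (∑ β, ∑ γ, ∑ μ, eps α β γ * pd (fun z => v t z μ) β y * pd (fun z => η t z μ) γ y)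
      = (∑ β, ∑ γ, eps α β γ * pd (fun z => v 0 z γ) β y)
        + ∫ s in (0:ℝ)..t, (fun s => ∑ β, ∑ γ, ∑ lam, ∑ μ,
            eps α β γ * (Jac s y)⁻¹ lam μ * pd (q s) lam y *
              pd (fun z => η s z μ) γ y * (pd (R s) β y / (R s y) ^ 2)) s
  set Fc : ℝ → ℝ := fun s => ∑ β, ∑ γ, ∑ μ,
    eps α β γ * pd (fun z => v s z μ) β y * pd (fun z => η s z μ) γ y with hFcdef
  set Gc : ℝ → ℝ := fun s => ∑ β, ∑ γ, ∑ lam, ∑ μ,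
    eps α β γ * (Jac s y)⁻¹ lam μ * pd (q s) lam y *
      pd (fun z => η s z μ) γ y * (pd (R s) β y / (R s y) ^ 2) with hGcdef
  -- continuity of Fc on [0,T]
  have hpdv_cont : ∀ (b m : Fin 3), ContinuousOn (fun s => pd (fun z => v s z m) b y) (Icc 0 T) :=
    fun b m => contOn_pd hT hΩ (hvc m) hy b
  have hpdη_cont : ∀ (c m : Fin 3), ContinuousOn (fun s => pd (fun z => η s z m) c y) (Icc 0 T) :=
    fun c m => contOn_pd hT hΩ (hηc m) hy c
  have hFcont : ContinuousOn Fc (Icc 0 T) := by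
    apply continuousOn_finset_sum _ fun β _ => ?_
    apply continuousOn_finset_sum _ fun γ _ => ?_
    apply continuousOn_finset_sum _ fun μ _ => ?_
    exact ((continuousOn_const.mul (hpdv_cont β μ)).mul (hpdη_cont γ μ))
  -- continuity of Gc on [0,T]
  have hJacy_cont : ∀ i k : Fin 3, ContinuousOn (fun s => Jac s y i k) (Icc 0 T) := by
    intro i k
    apply ContinuousOn.congr (contOn_pd hT hΩ (hηc i) hy k)
    intro s hs
    exact hJac' s hs y hy i k
  have hdet_ne : ∀ s ∈ Icc (0:ℝ) T, (Jac s y).det ≠ 0 := by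
    intro s hs
    exact (hinv s hs y hy).ne_zero
  have hJacInv_cont : ∀ lam μ : Fin 3,
      ContinuousOn (fun s => (Jac s y)⁻¹ lam μ) (Icc 0 T) :=
    fun lam μ => contOn_inv3 hJacy_cont hdet_ne lam μ
  have hpdq_cont : ∀ lam : Fin 3, ContinuousOn (fun s => pd (q s) lam y) (Icc 0 T) :=
    fun lam => contOn_pd hT hΩ hqsm hy lam
  have hpdR_cont : ∀ b : Fin 3, ContinuousOn (fun s => pd (R s) b y) (Icc 0 T) :=
    fun b => contOn_pd hT hΩ hRsm hy b
  have hRy_cont : ContinuousOn (fun s => R s y) (Icc 0 T) := by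
    have := hRsm.continuousOn.comp ((continuous_id.prodMk continuous_const).continuousOn)
      (fun s (hs : s ∈ Icc (0:ℝ) T) => Set.mk_mem_prod hs hy)
    exact this
  have hGcont : ContinuousOn Gc (Icc 0 T) := by
    apply continuousOn_finset_sum _ fun β _ => ?_
    apply continuousOn_finset_sum _ fun γ _ => ?_
    apply continuousOn_finset_sum _ fun lam _ => ?_
    apply continuousOn_finset_sum _ fun μ _ => ?_
    refine ContinuousOn.mul ?_ (ContinuousOn.div (hpdR_cont β) (hRy_cont.pow 2) ?_)
    · exact ((continuousOn_const.mul (hJacInv_cont lam μ)).mul (hpdq_cont lam)).mul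
        (hpdη_cont γ μ)
    · intro s hs
      exact pow_ne_zero 2 (hRpos s hs y hy).ne'
  -- derivative of Fc
  have hderiv : ∀ s ∈ Ioo (0:ℝ) t, HasDerivAt Fc (Gc s) s := by
    intro s hs
    have hsT : s ∈ Icc (0:ℝ) T := ⟨hs.1.le, hs.2.le.trans htT⟩
    have hsI : s ∈ Ioo (0:ℝ) T := ⟨hs.1, lt_of_lt_of_le hs.2 htT⟩
    have hnb : ∀ z ∈ Ω, (Icc (0:ℝ) T ×ˢ Ω) ∈ nhds (s, z) := by
      intro z hz
      exact mem_nhds_iff.mpr ⟨Ioo 0 T ×ˢ Ω, prod_mono Ioo_subset_Icc_self (subset_refl Ω),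
        isOpen_Ioo.prod hΩ, ⟨hsI, hz⟩⟩
    have hηAt : ∀ z ∈ Ω, ContDiffAt ℝ (⊤ : ℕ∞) (fun p : ℝ × E3 => η p.1 p.2) (s, z) :=
      fun z hz => hη.contDiffAt (hnb z hz)
    have hvAt : ∀ z ∈ Ω, ContDiffAt ℝ (⊤ : ℕ∞) (fun p : ℝ × E3 => v p.1 p.2) (s, z) :=
      fun z hz => hvsm.contDiffAt (hnb z hz)
    -- spatial smoothness at y of the relevant fields
    have hηsl : ∀ z ∈ Ω, ContDiffAt ℝ (⊤ : ℕ∞) (fun w => η s w) z :=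
      fun z hz => slice_contDiffAt hΩ hη hsT hz
    have hqsl : ContDiffAt ℝ (⊤ : ℕ∞) (q s) y := slice_contDiffAt hΩ hqsm hsT hy
    have hRsl : ContDiffAt ℝ (⊤ : ℕ∞) (R s) y := slice_contDiffAt hΩ hRsm hsT hy
    have hηisl : ∀ i : Fin 3, ContDiffAt ℝ (⊤ : ℕ∞) (fun w => η s w i) y :=
      fun i => slice_contDiffAt hΩ (hηc i) hsT hy
    -- smoothness of Jacobian entries, inverse entries, and pd of q in space
    have hpdη_cd : ∀ i k : Fin 3, ContDiffAt ℝ (⊤ : ℕ∞) (fun z => pd (fun w => η s w i) k z) y := by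
      intro i k
      exact ((hηisl i).fderiv_right (by simp)).clm_apply contDiffAt_const
    have hpdq_cd : ∀ k : Fin 3, ContDiffAt ℝ (⊤ : ℕ∞) (fun z => pd (q s) k z) y := by
      intro k
      exact (hqsl.fderiv_right (by simp)).clm_apply contDiffAt_const
    have hJacEnt_cd : ∀ i k : Fin 3, ContDiffAt ℝ (⊤ : ℕ∞) (fun z => Jac s z i k) y := by
      intro i k
      apply (hpdη_cd i k).congr_of_eventuallyEq
      filter_upwards [hyn] with z hz
      exact hJac' s hsT z hz i k
    have hdet_ne_y : (Jac s y).det ≠ 0 := (hinv s hsT y hy).ne_zero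
    have hJacInv_cd : ∀ lam μ : Fin 3, ContDiffAt ℝ (⊤ : ℕ∞) (fun z => (Jac s z)⁻¹ lam μ) y :=
      fun lam μ => contDiffAt_inv3 hJacEnt_cd hdet_ne_y lam μ
    -- the field u
    set u : Fin 3 → E3 → ℝ :=
      fun μ z => ∑ lam, (Jac s z)⁻¹ lam μ * pd (q s) lam z with hudef
    have hu_cd : ∀ μ, ContDiffAt ℝ (⊤ : ℕ∞) (u μ) y := by
      intro μ
      apply ContDiffAt.sum fun lam _ => ?_
      exact (hJacInv_cd lam μ).mul (hpdq_cd lam)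
    have hρy : R s y > 0 := hRpos s hsT y hy
    -- derivatives in time of pd-quantities
    have hBder : ∀ (c m : Fin 3), HasDerivAt (fun τ => pd (fun z => η τ z m) c y)
        (pd (fun z => v s z m) c y) s := by
      intro c m
      have hjm : ContDiffAt ℝ (⊤ : ℕ∞) (fun p : ℝ × E3 => η p.1 p.2 m) (s, y) :=
        ((ContinuousLinearMap.proj m : E3 →L[ℝ] ℝ).contDiff.contDiffAt).comp (s, y) (hηAt y hy)
      have hswap : HasDerivAt (fun τ => pd (fun z => η τ z m) c y)
          (pd (fun z => deriv (fun τ => η τ z m) s) c y) s :=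
        hasDerivAt_pd_swap (f := fun p : ℝ × E3 => η p.1 p.2 m) hjm c
      have heq : (fun z => deriv (fun τ => η τ z m) s) =ᶠ[nhds y] (fun z => v s z m) := by
        filter_upwards [hyn] with z hz
        have hdz : ContDiffAt ℝ (⊤ : ℕ∞) (fun τ => η τ z) s :=
          (hηAt z hz).comp s (contDiffAt_id.prodMk contDiffAt_const)
        have hvec : HasDerivAt (fun τ => η τ z) (deriv (fun τ => η τ z) s) s :=
          (hdz.differentiableAt (by simp)).hasDerivAt
        have hcomp := ((ContinuousLinearMap.proj m : E3 →L[ℝ] ℝ).hasFDerivAt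
          (x := η s z)).comp_hasDerivAt s hvec
        have h1 : deriv (fun τ => η τ z m) s = deriv (fun τ => η τ z) s m := by
          have : HasDerivAt (fun τ => η τ z m) (deriv (fun τ => η τ z) s m) s := hcomp
          exact this.deriv
        rw [h1, hv s hsT z hz]
      have h2 : pd (fun z => deriv (fun τ => η τ z m) s) c y
          = pd (fun z => v s z m) c y := pd_congr heq c
      exact h2 ▸ hswap
    have hAder : ∀ (b m : Fin 3), HasDerivAt (fun τ => pd (fun z => v τ z m) b y)
        (pd (fun z => deriv (fun τ => v τ z m) s) b y) s := by
      intro b m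
      have hjm : ContDiffAt ℝ (⊤ : ℕ∞) (fun p : ℝ × E3 => v p.1 p.2 m) (s, y) :=
        ((ContinuousLinearMap.proj m : E3 →L[ℝ] ℝ).contDiff.contDiffAt).comp (s, y) (hvAt y hy)
      exact hasDerivAt_pd_swap (f := fun p : ℝ × E3 => v p.1 p.2 m) hjm b
    -- momentum equation: value of the time-derivative of v
    have hF1 : ∀ (b m : Fin 3), pd (fun z => deriv (fun τ => v τ z m) s) b y
        = u m y * pd (R s) b y / (R s y)^2
          - fderiv ℝ (u m) y (Pi.single b 1) / R s y := by
      intro b m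
      have heqd : (fun z => deriv (fun τ => v τ z m) s)
          =ᶠ[nhds y] (fun z => -(u m z * (R s z)⁻¹)) := by
        filter_upwards [hyn] with z hz
        have hmz := hmom s hsT z hz m
        have hRz := hRpos s hsT z hz
        have hRne : R s z ≠ 0 := hRz.ne'
        have h1 : R s z * deriv (fun τ => v τ z m) s
            = -(∑ lam, (Jac s z)⁻¹ lam m * pd (q s) lam z) := by linarith [hmz]
        calc deriv (fun τ => v τ z m) s
            = (R s z)⁻¹ * (R s z * deriv (fun τ => v τ z m) s) := by
              rw [inv_mul_cancel_left₀ hRne]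
          _ = -(u m z * (R s z)⁻¹) := by rw [h1, hudef]; ring
      rw [pd_congr heqd b]
      have hud : HasFDerivAt (u m) (fderiv ℝ (u m) y) y :=
        ((hu_cd m).differentiableAt (by simp)).hasFDerivAt
      have hRd : HasFDerivAt (R s) (fderiv ℝ (R s) y) y :=
        (hRsl.differentiableAt (by simp)).hasFDerivAt
      have hRinv : HasFDerivAt (fun z => (R s z)⁻¹)
          ((-((R s y) ^ 2)⁻¹) • fderiv ℝ (R s) y) y :=
        (hasDerivAt_inv hρy.ne').comp_hasFDerivAt y hRd
      have hprod2 := (hud.mul hRinv).neg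
      have hval : pd (fun z => -(u m z * (R s z)⁻¹)) b y
          = -(u m y * ((-((R s y) ^ 2)⁻¹) • fderiv ℝ (R s) y) (Pi.single b 1)
              + (R s y)⁻¹ * fderiv ℝ (u m) y (Pi.single b 1)) := by
        unfold pd
        rw [show (fun z => -(u m z * (R s z)⁻¹)) = -(u m * fun z => (R s z)⁻¹) from rfl,
          hprod2.fderiv]
        simp [smul_eq_mul]
      rw [hval]
      have hpdR : (( -((R s y) ^ 2)⁻¹) • fderiv ℝ (R s) y) (Pi.single b 1)
          = (-((R s y) ^ 2)⁻¹) * pd (R s) b y := by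
        simp [pd, smul_eq_mul]
      rw [hpdR]
      have h2 : R s y ≠ 0 := hρy.ne'
      field_simp
      ring
    -- key contraction identity
    have hF2 : ∀ (b c : Fin 3), (∑ m, fderiv ℝ (u m) y (Pi.single b 1) * Jac s y m c)
        = pd (fun z => pd (q s) c z) b y
          - ∑ m, u m y * pd (fun z => pd (fun w => η s w m) c z) b y := by
      intro b c
      set w : E3 → ℝ := fun z => ∑ m, u m z * Jac s z m c with hwdef
      have hwq : w =ᶠ[nhds y] (fun z => pd (q s) c z) := by
        filter_upwards [hyn] with z hz
        have h1 : ∑ m, u m z * Jac s z m c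
            = ∑ lam, (pd (q s) lam z) * ∑ m, (Jac s z)⁻¹ lam m * Jac s z m c := by
          rw [hudef]
          simp only [Finset.sum_mul, Finset.mul_sum]
          rw [Finset.sum_comm]
          exact Finset.sum_congr rfl fun lam _ => Finset.sum_congr rfl fun m _ => by ring
        show ∑ m, u m z * Jac s z m c = pd (q s) c z
        rw [h1]
        have h2 : ∀ lam : Fin 3, (∑ m, (Jac s z)⁻¹ lam m * Jac s z m c)
            = ((Jac s z)⁻¹ * Jac s z) lam c := fun lam => (Matrix.mul_apply).symm
        have h3 : (Jac s z)⁻¹ * Jac s z = 1 := Matrix.nonsing_inv_mul _ (hinv s hsT z hz)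
        simp only [h2, h3, Matrix.one_apply, mul_ite, mul_one, mul_zero]
        rw [Finset.sum_ite_eq' Finset.univ c (fun lam => pd (q s) lam z)]
        simp
      have hJd : ∀ m : Fin 3, HasFDerivAt (fun z => Jac s z m c)
          (fderiv ℝ (fun z => Jac s z m c) y) y :=
        fun m => ((hJacEnt_cd m c).differentiableAt (by simp)).hasFDerivAt
      have hud : ∀ m, HasFDerivAt (u m) (fderiv ℝ (u m) y) y :=
        fun m => ((hu_cd m).differentiableAt (by simp)).hasFDerivAt
      have hwd : HasFDerivAt w (∑ m, (u m y • fderiv ℝ (fun z => Jac s z m c) y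
          + Jac s y m c • fderiv ℝ (u m) y)) y := by
        apply HasFDerivAt.fun_sum
        intro m _
        exact (hud m).mul (hJd m)
      have happ : pd w b y = ∑ m, (u m y * (fderiv ℝ (fun z => Jac s z m c) y (Pi.single b 1))
          + Jac s y m c * fderiv ℝ (u m) y (Pi.single b 1)) := by
        unfold pd
        rw [hwd.fderiv]
        simp [smul_eq_mul]
      have hwq' : pd w b y = pd (fun z => pd (q s) c z) b y := pd_congr hwq b
      have hJH : ∀ m : Fin 3, fderiv ℝ (fun z => Jac s z m c) y (Pi.single b 1)
          = pd (fun z => pd (fun w' => η s w' m) c z) b y := by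
        intro m
        have h4 : pd (fun z => Jac s z m c) b y
            = pd (fun z => pd (fun w' => η s w' m) c z) b y := by
          apply pd_congr _ b
          filter_upwards [hyn] with z hz
          exact hJac' s hsT z hz m c
        exact h4
      have hkey : pd (fun z => pd (q s) c z) b y
          = (∑ m, u m y * pd (fun z => pd (fun w' => η s w' m) c z) b y)
            + ∑ m, Jac s y m c * fderiv ℝ (u m) y (Pi.single b 1) := by
        rw [← hwq', happ, Finset.sum_add_distrib]
        congr 1
        exact Finset.sum_congr rfl fun m _ => by rw [hJH m]
      have hcomm : (∑ m, fderiv ℝ (u m) y (Pi.single b 1) * Jac s y m c)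
          = ∑ m, Jac s y m c * fderiv ℝ (u m) y (Pi.single b 1) :=
        Finset.sum_congr rfl fun m _ => mul_comm _ _
      rw [hcomm]
      linarith [hkey]
    -- assemble the derivative
    have hprod : ∀ (β γ μ : Fin 3), HasDerivAt
        (fun τ => eps α β γ * pd (fun z => v τ z μ) β y * pd (fun z => η τ z μ) γ y)
        (eps α β γ * pd (fun z => deriv (fun τ => v τ z μ) s) β y
            * pd (fun z => η s z μ) γ y
          + eps α β γ * pd (fun z => v s z μ) β y * pd (fun z => v s z μ) γ y) s := by
      intro β γ μ
      exact ((hAder β μ).const_mul (eps α β γ)).mul (hBder γ μ)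
    have hDF : HasDerivAt Fc (∑ β, ∑ γ, ∑ μ,
        (eps α β γ * pd (fun z => deriv (fun τ => v τ z μ) s) β y
            * pd (fun z => η s z μ) γ y
          + eps α β γ * pd (fun z => v s z μ) β y * pd (fun z => v s z μ) γ y)) s := by
      apply HasDerivAt.fun_sum fun β _ => ?_
      apply HasDerivAt.fun_sum fun γ _ => ?_
      apply HasDerivAt.fun_sum fun μ _ => ?_
      exact hprod β γ μ
    have hDG : (∑ β, ∑ γ, ∑ μ,
        (eps α β γ * pd (fun z => deriv (fun τ => v τ z μ) s) β y
            * pd (fun z => η s z μ) γ y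
          + eps α β γ * pd (fun z => v s z μ) β y * pd (fun z => v s z μ) γ y)) = Gc s := by
      have hBJ : ∀ c m : Fin 3, pd (fun z => η s z m) c y = Jac s y m c :=
        fun c m => (hJac' s hsT y hy m c).symm
      have hsymq : ∀ b c : Fin 3,
          pd (fun z => pd (q s) c z) b y = pd (fun z => pd (q s) b z) c y :=
        fun b c => pd_pd_symm hqsl b c
      have hsymη : ∀ (m b c : Fin 3),
          pd (fun z => pd (fun w => η s w m) c z) b y
            = pd (fun z => pd (fun w => η s w m) b z) c y :=
        fun m b c => pd_pd_symm (hηisl m) b c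
      have hKey : ∀ b c : Fin 3,
          (∑ m, pd (fun z => deriv (fun τ => v τ z m) s) b y * pd (fun z => η s z m) c y)
          = (pd (R s) b y / (R s y)^2) * (∑ m, u m y * Jac s y m c)
            - (R s y)⁻¹ * (pd (fun z => pd (q s) c z) b y
                - ∑ m, u m y * pd (fun z => pd (fun w => η s w m) c z) b y) := by
        intro b c
        rw [← hF2 b c]
        simp only [hF1, hBJ, Fin.sum_univ_three]
        ring
      have hGc' : Gc s = ∑ β, ∑ γ, eps α β γ *
          ((pd (R s) β y / (R s y)^2) * (∑ m, u m y * Jac s y m γ)) := by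
        simp only [hGcdef]
        refine Finset.sum_congr rfl fun β _ => Finset.sum_congr rfl fun γ _ => ?_
        simp only [hBJ, hudef, Fin.sum_univ_three]
        ring
      calc (∑ β, ∑ γ, ∑ μ,
          (eps α β γ * pd (fun z => deriv (fun τ => v τ z μ) s) β y
              * pd (fun z => η s z μ) γ y
            + eps α β γ * pd (fun z => v s z μ) β y * pd (fun z => v s z μ) γ y))
          = (∑ β, ∑ γ, eps α β γ * (∑ μ, pd (fun z => deriv (fun τ => v τ z μ) s) β y
                * pd (fun z => η s z μ) γ y))
            + (∑ β, ∑ γ, eps α β γ * (∑ μ, pd (fun z => v s z μ) β y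
                * pd (fun z => v s z μ) γ y)) := by
            rw [← Finset.sum_add_distrib]
            refine Finset.sum_congr rfl fun β _ => ?_
            rw [← Finset.sum_add_distrib]
            refine Finset.sum_congr rfl fun γ _ => ?_
            rw [Finset.mul_sum, Finset.mul_sum, ← Finset.sum_add_distrib]
            exact Finset.sum_congr rfl fun μ _ => by ring
        _ = (∑ β, ∑ γ, eps α β γ * ((pd (R s) β y / (R s y)^2)
                * (∑ m, u m y * Jac s y m γ)
              - (R s y)⁻¹ * (pd (fun z => pd (q s) γ z) β y
                - ∑ m, u m y * pd (fun z => pd (fun w => η s w m) γ z) β y))) + 0 := by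
            rw [eps_contract α
              (fun b c => ∑ μ, pd (fun z => v s z μ) b y * pd (fun z => v s z μ) c y)
              (fun b c => Finset.sum_congr rfl fun μ _ => mul_comm _ _)]
            congr 1
            exact Finset.sum_congr rfl fun β _ => Finset.sum_congr rfl fun γ _ => by
              rw [hKey β γ]
        _ = (∑ β, ∑ γ, (eps α β γ * ((pd (R s) β y / (R s y)^2)
                * (∑ m, u m y * Jac s y m γ))
              + eps α β γ * (-((R s y)⁻¹ * (pd (fun z => pd (q s) γ z) β y
                - ∑ m, u m y * pd (fun z => pd (fun w => η s w m) γ z) β y))))) := by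
            rw [add_zero]
            exact Finset.sum_congr rfl fun β _ => Finset.sum_congr rfl fun γ _ => by ring
        _ = (∑ β, ∑ γ, eps α β γ * ((pd (R s) β y / (R s y)^2)
                * (∑ m, u m y * Jac s y m γ)))
            + (∑ β, ∑ γ, eps α β γ * (-((R s y)⁻¹ * (pd (fun z => pd (q s) γ z) β y
                - ∑ m, u m y * pd (fun z => pd (fun w => η s w m) γ z) β y)))) := by
            rw [← Finset.sum_add_distrib]
            refine Finset.sum_congr rfl fun β _ => ?_
            rw [← Finset.sum_add_distrib]
        _ = Gc s + 0 := by
            have hsymf : ∀ b c : Fin 3,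
                -((R s y)⁻¹ * (pd (fun z => pd (q s) c z) b y
                  - ∑ m, u m y * pd (fun z => pd (fun w => η s w m) c z) b y))
                = -((R s y)⁻¹ * (pd (fun z => pd (q s) b z) c y
                  - ∑ m, u m y * pd (fun z => pd (fun w => η s w m) b z) c y)) := by
              intro b c
              have hsum : (∑ m, u m y * pd (fun z => pd (fun w => η s w m) c z) b y)
                  = ∑ m, u m y * pd (fun z => pd (fun w => η s w m) b z) c y :=
                Finset.sum_congr rfl fun m _ => by rw [hsymη m b c]
              rw [hsymq b c, hsum]
            rw [eps_contract α
              (fun b c => -((R s y)⁻¹ * (pd (fun z => pd (q s) c z) b y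
                - ∑ m, u m y * pd (fun z => pd (fun w => η s w m) c z) b y)))
              hsymf, ← hGc']
        _ = Gc s := add_zero _
    exact hDG ▸ hDF
  -- FTC
  have hGint : IntervalIntegrable Gc MeasureTheory.volume 0 t := by
    apply ContinuousOn.intervalIntegrable
    rw [uIcc_of_le ht0]
    exact hGcont.mono (Icc_subset_Icc le_rfl htT)
  have hFTC : ∫ s in (0:ℝ)..t, Gc s = Fc t - Fc 0 :=
    intervalIntegral.integral_eq_sub_of_hasDeriv_right_of_le ht0
      (hFcont.mono (Icc_subset_Icc le_rfl htT))
      (fun s hs => (hderiv s hs).hasDerivWithinAt) hGint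
  -- initial value
  have hF0 : Fc 0 = ∑ β, ∑ γ, eps α β γ * pd (fun z => v 0 z γ) β y := by
    have hpdη0 : ∀ γ μ : Fin 3, pd (fun z => η 0 z μ) γ y = if μ = γ then 1 else 0 := by
      intro γ μ
      have heq0 : (fun z => η 0 z μ) =ᶠ[nhds y] (fun z => z μ) := by
        filter_upwards [hyn] with z hz
        rw [hη0 z hz]
      rw [pd_congr heq0 γ]
      unfold pd
      rw [show (fun z : E3 => z μ) = ⇑(ContinuousLinearMap.proj μ : E3 →L[ℝ] ℝ) from rfl,
        (ContinuousLinearMap.proj μ : E3 →L[ℝ] ℝ).fderiv]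
      simp [Pi.single_apply]
    rw [hFcdef]
    simp only [hpdη0, mul_ite, mul_one, mul_zero]
    refine Finset.sum_congr rfl fun β _ => Finset.sum_congr rfl fun γ _ => ?_
    rw [Finset.sum_ite_eq' Finset.univ γ
      (fun μ => eps α β γ * pd (fun z => v 0 z μ) β y)]
    simp
  show Fc t = _ + ∫ s in (0:ℝ)..t, Gc s
  rw [hFTC, hF0]
  ring
end

section
/- Let c₀ > 0 and let f : ℝ → ℝ be four times continuously differentiable such that for all x ∈ ℝ and all 1 ≤ k ≤ 4 one has |f^{(k)}(x)| ≤ c₀ and |f^{(k)}(x)| ≤ c₀ |f'(x)|^k. Let q : ℝ → ℝ be four times continuously differentiable and set R = f ∘ q. Then there is a constant C, depending only on c₀, such that for every 1 ≤ r ≤ 4 and every t ∈ ℝ: |f'(q(t)) · q^{(r)}(t)| ≤ C ( |R^{(r)}(t)| + ∑ |R^{(j₁)}(t)| ⋯ |R^{(j_k)}(t)| ), where the sum ranges over all 2 ≤ k ≤ r and all tuples (j₁,…,j_k) of positive integers with j₁ + ⋯ + j_k = r. -/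
/-!
Write `a = f'(q)` and `R = f ∘ q`. By Faà di Bruno, `R⁽ʳ⁾ = a q⁽ʳ⁾ + ∑ f⁽ᵏ⁾(q) q⁽ⁱ¹⁾ ⋯ q⁽ⁱᵏ⁾`,
the sum running over `k ≥ 2` and `i₁ + ⋯ + iₖ = r`. The hypothesis `|f⁽ᵏ⁾| ≤ c₀ |f'|ᵏ` lets us
hand one factor `a` to each `q⁽ⁱ⁾`, so every term of the sum is at most `c₀ ∏ |a q⁽ⁱ⁾|`. Hence
`|a q⁽ʳ⁾|` is bounded by `|R⁽ʳ⁾|` plus a polynomial in the lower-order `|a q⁽ⁱ⁾|`, and since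
`a q' = R'`, substituting these bounds recursively leaves only products `|R⁽ʲ¹⁾| ⋯ |R⁽ʲᵏ⁾|` over
compositions of `r`.
-/

open scoped ContDiff

theorem ContDiff.hasDerivAt_iteratedDeriv {g : ℝ → ℝ} {n : ℕ∞ω} (hg : ContDiff ℝ n g) {k : ℕ}
    (hk : (k : ℕ∞ω) < n) (x : ℝ) :
    HasDerivAt (iteratedDeriv k g) (iteratedDeriv (k + 1) g x) x := by
  rw [iteratedDeriv_succ]
  exact (hg.differentiable_iteratedDeriv k hk x).hasDerivAt

theorem ContDiff.hasDerivAt_iteratedDeriv_comp {f q : ℝ → ℝ} {n : ℕ∞ω} (hf : ContDiff ℝ n f)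
    (hq : Differentiable ℝ q) {k : ℕ} (hk : (k : ℕ∞ω) < n) (t : ℝ) :
    HasDerivAt (fun s => iteratedDeriv k f (q s)) (iteratedDeriv (k + 1) f (q t) * deriv q t) t :=
  (hf.hasDerivAt_iteratedDeriv hk (q t)).comp t (hq t).hasDerivAt

section FaaDiBruno

variable {f q : ℝ → ℝ}

theorem deriv_comp_eq (hf : Differentiable ℝ f) (hq : Differentiable ℝ q) :
    deriv (f ∘ q) = fun t => deriv f (q t) * deriv q t :=
  funext fun t => deriv_comp t (hf (q t)) (hq t)

theorem iteratedDeriv_two_comp (hf : ContDiff ℝ 2 f) (hq : ContDiff ℝ 2 q) :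
    iteratedDeriv 2 (f ∘ q) = fun t =>
      iteratedDeriv 2 f (q t) * deriv q t ^ 2 + deriv f (q t) * iteratedDeriv 2 q t := by
  have hq' := hq.differentiable (by norm_num)
  rw [iteratedDeriv_succ, iteratedDeriv_one, deriv_comp_eq (hf.differentiable (by norm_num)) hq']
  funext t
  have hf₁ := hf.hasDerivAt_iteratedDeriv_comp hq' (k := 1) (by norm_num) t
  have hq₁ := hq.hasDerivAt_iteratedDeriv (k := 1) (by norm_num) t
  simp only [iteratedDeriv_one] at hf₁ hq₁
  exact (hf₁.mul hq₁).deriv.trans (by ring)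

theorem iteratedDeriv_three_comp (hf : ContDiff ℝ 3 f) (hq : ContDiff ℝ 3 q) :
    iteratedDeriv 3 (f ∘ q) = fun t =>
      iteratedDeriv 3 f (q t) * deriv q t ^ 3
        + 3 * iteratedDeriv 2 f (q t) * deriv q t * iteratedDeriv 2 q t
        + deriv f (q t) * iteratedDeriv 3 q t := by
  have hq' := hq.differentiable (by norm_num)
  rw [iteratedDeriv_succ,
    iteratedDeriv_two_comp (hf.of_le (by norm_num)) (hq.of_le (by norm_num))]
  funext t
  have hf₁ := hf.hasDerivAt_iteratedDeriv_comp hq' (k := 1) (by norm_num) t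
  have hf₂ := hf.hasDerivAt_iteratedDeriv_comp hq' (k := 2) (by norm_num) t
  have hq₁ := hq.hasDerivAt_iteratedDeriv (k := 1) (by norm_num) t
  have hq₂ := hq.hasDerivAt_iteratedDeriv (k := 2) (by norm_num) t
  simp only [iteratedDeriv_one] at hf₁ hq₁
  exact ((hf₂.mul (hq₁.pow 2)).add (hf₁.mul hq₂)).deriv.trans
    (by simp only [Pi.pow_apply, Nat.cast_ofNat, Nat.add_one_sub_one, pow_one]; ring)

theorem iteratedDeriv_four_comp (hf : ContDiff ℝ 4 f) (hq : ContDiff ℝ 4 q) :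
    iteratedDeriv 4 (f ∘ q) = fun t =>
      iteratedDeriv 4 f (q t) * deriv q t ^ 4
        + 6 * iteratedDeriv 3 f (q t) * deriv q t ^ 2 * iteratedDeriv 2 q t
        + 3 * iteratedDeriv 2 f (q t) * iteratedDeriv 2 q t ^ 2
        + 4 * iteratedDeriv 2 f (q t) * deriv q t * iteratedDeriv 3 q t
        + deriv f (q t) * iteratedDeriv 4 q t := by
  have hq' := hq.differentiable (by norm_num)
  rw [iteratedDeriv_succ,
    iteratedDeriv_three_comp (hf.of_le (by norm_num)) (hq.of_le (by norm_num))]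
  funext t
  have hf₁ := hf.hasDerivAt_iteratedDeriv_comp hq' (k := 1) (by norm_num) t
  have hf₂ := hf.hasDerivAt_iteratedDeriv_comp hq' (k := 2) (by norm_num) t
  have hf₃ := hf.hasDerivAt_iteratedDeriv_comp hq' (k := 3) (by norm_num) t
  have hq₁ := hq.hasDerivAt_iteratedDeriv (k := 1) (by norm_num) t
  have hq₂ := hq.hasDerivAt_iteratedDeriv (k := 2) (by norm_num) t
  have hq₃ := hq.hasDerivAt_iteratedDeriv (k := 3) (by norm_num) t
  simp only [iteratedDeriv_one] at hf₁ hq₁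
  exact ((((hf₃.mul (hq₁.pow 3)).add (((hf₂.const_mul 3).mul hq₁).mul hq₂)).add
    (hf₁.mul hq₃))).deriv.trans
    (by simp only [Pi.pow_apply, Pi.mul_apply, Nat.cast_ofNat, Nat.add_one_sub_one]; ring)

end FaaDiBruno

section ChainRuleEstimates

/- `a`, `uᵢ`, `Fₖ` stand for `f'(q)`, `q⁽ⁱ⁾`, `f⁽ᵏ⁾(q)`; the expression inside the first absolute
value on the right-hand side is the chain-rule expansion of `(f ∘ q)⁽ʳ⁾`. -/
variable {c a u₁ u₂ u₃ u₄ F₂ F₃ F₄ : ℝ}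

theorem abs_mul_le_of_abs_le_mul_pow {F m : ℝ} {k : ℕ} (hF : |F| ≤ c * |a| ^ k) :
    |F * m| ≤ c * |a ^ k * m| := by
  rw [abs_mul, abs_mul, abs_pow, ← mul_assoc]
  exact mul_le_mul_of_nonneg_right hF (abs_nonneg m)

theorem abs_mul_le_of_chainRule_two (hF₂ : |F₂| ≤ c * |a| ^ 2) :
    |a * u₂| ≤ |F₂ * u₁ ^ 2 + a * u₂| + c * |a * u₁| ^ 2 := by
  have h₁₁ := abs_mul_le_of_abs_le_mul_pow (m := u₁ ^ 2) hF₂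
  rw [← mul_pow, abs_pow] at h₁₁
  set R := F₂ * u₁ ^ 2 + a * u₂
  rw [abs_le]
  constructor <;> linarith [le_abs_self R, neg_abs_le R, le_abs_self (F₂ * u₁ ^ 2),
    neg_abs_le (F₂ * u₁ ^ 2)]

theorem abs_mul_le_of_chainRule_three (hF₂ : |F₂| ≤ c * |a| ^ 2) (hF₃ : |F₃| ≤ c * |a| ^ 3) :
    |a * u₃| ≤ |F₃ * u₁ ^ 3 + 3 * F₂ * u₁ * u₂ + a * u₃| + c * |a * u₁| ^ 3
      + 3 * c * |a * u₁| * |a * u₂| := by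
  have h₁₁₁ := abs_mul_le_of_abs_le_mul_pow (m := u₁ ^ 3) hF₃
  have h₁₂ := abs_mul_le_of_abs_le_mul_pow (m := u₁ * u₂) hF₂
  rw [← mul_pow, abs_pow] at h₁₁₁
  rw [show a ^ 2 * (u₁ * u₂) = a * u₁ * (a * u₂) by ring, abs_mul (a * u₁)] at h₁₂
  set R := F₃ * u₁ ^ 3 + 3 * F₂ * u₁ * u₂ + a * u₃
  rw [abs_le]
  constructor <;> linarith [le_abs_self R, neg_abs_le R, le_abs_self (F₃ * u₁ ^ 3),
    neg_abs_le (F₃ * u₁ ^ 3), le_abs_self (F₂ * (u₁ * u₂)), neg_abs_le (F₂ * (u₁ * u₂))]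

theorem abs_mul_le_of_chainRule_four (hF₂ : |F₂| ≤ c * |a| ^ 2) (hF₃ : |F₃| ≤ c * |a| ^ 3)
    (hF₄ : |F₄| ≤ c * |a| ^ 4) :
    |a * u₄| ≤ |F₄ * u₁ ^ 4 + 6 * F₃ * u₁ ^ 2 * u₂ + 3 * F₂ * u₂ ^ 2 + 4 * F₂ * u₁ * u₃
        + a * u₄| + c * |a * u₁| ^ 4 + 6 * c * |a * u₁| ^ 2 * |a * u₂| + 3 * c * |a * u₂| ^ 2
      + 4 * c * |a * u₁| * |a * u₃| := by
  have h₁₁₁₁ := abs_mul_le_of_abs_le_mul_pow (m := u₁ ^ 4) hF₄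
  have h₁₁₂ := abs_mul_le_of_abs_le_mul_pow (m := u₁ ^ 2 * u₂) hF₃
  have h₂₂ := abs_mul_le_of_abs_le_mul_pow (m := u₂ ^ 2) hF₂
  have h₁₃ := abs_mul_le_of_abs_le_mul_pow (m := u₁ * u₃) hF₂
  rw [← mul_pow, abs_pow] at h₁₁₁₁ h₂₂
  rw [show a ^ 3 * (u₁ ^ 2 * u₂) = (a * u₁) ^ 2 * (a * u₂) by ring, abs_mul ((a * u₁) ^ 2),
    abs_pow] at h₁₁₂
  rw [show a ^ 2 * (u₁ * u₃) = a * u₁ * (a * u₃) by ring, abs_mul (a * u₁)] at h₁₃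
  set R := F₄ * u₁ ^ 4 + 6 * F₃ * u₁ ^ 2 * u₂ + 3 * F₂ * u₂ ^ 2 + 4 * F₂ * u₁ * u₃ + a * u₄
  rw [abs_le]
  constructor <;> linarith [le_abs_self R, neg_abs_le R, le_abs_self (F₄ * u₁ ^ 4),
    neg_abs_le (F₄ * u₁ ^ 4), le_abs_self (F₃ * (u₁ ^ 2 * u₂)), neg_abs_le (F₃ * (u₁ ^ 2 * u₂)),
    le_abs_self (F₂ * u₂ ^ 2), neg_abs_le (F₂ * u₂ ^ 2), le_abs_self (F₂ * (u₁ * u₃)),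
    neg_abs_le (F₂ * (u₁ * u₃))]

end ChainRuleEstimates

def compositionSum (D : ℕ → ℝ) (r : ℕ) : ℝ :=
  ∑ k ∈ Finset.Icc 2 r,
    ∑ j ∈ (Fintype.piFinset fun _ : Fin k => Finset.Icc 1 r).filter (fun j => ∑ i, j i = r),
      ∏ i, D (j i)

section compositionSum

variable (D : ℕ → ℝ)

theorem compositionSum_one : compositionSum D 1 = 0 := by
  simp [compositionSum]

theorem compositionSum_two : compositionSum D 2 = D 1 ^ 2 := by
  have h₂ : (Fintype.piFinset fun _ : Fin 2 => Finset.Icc 1 2).filter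
      (fun j => ∑ i, j i = 2) = {![1, 1]} := by decide
  rw [compositionSum, Finset.Icc_self, Finset.sum_singleton, h₂]
  simp [Fin.prod_univ_succ, sq]

theorem compositionSum_three : compositionSum D 3 = 2 * D 1 * D 2 + D 1 ^ 3 := by
  have h₂ : (Fintype.piFinset fun _ : Fin 2 => Finset.Icc 1 3).filter
      (fun j => ∑ i, j i = 3) = {![1, 2], ![2, 1]} := by decide
  have h₃ : (Fintype.piFinset fun _ : Fin 3 => Finset.Icc 1 3).filter
      (fun j => ∑ i, j i = 3) = {![1, 1, 1]} := by decide
  rw [compositionSum, show Finset.Icc 2 3 = {2, 3} from rfl, Finset.sum_pair (by norm_num), h₂, h₃,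
    Finset.sum_pair (by decide), Finset.sum_singleton]
  simp only [Fin.prod_univ_succ, Fin.prod_univ_zero, Matrix.cons_val_zero, Matrix.cons_val_succ]
  ring

theorem compositionSum_four :
    compositionSum D 4 = 2 * D 1 * D 3 + D 2 ^ 2 + 3 * D 1 ^ 2 * D 2 + D 1 ^ 4 := by
  have h₂ : (Fintype.piFinset fun _ : Fin 2 => Finset.Icc 1 4).filter
      (fun j => ∑ i, j i = 4) = {![1, 3], ![2, 2], ![3, 1]} := by decide
  have h₃ : (Fintype.piFinset fun _ : Fin 3 => Finset.Icc 1 4).filter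
      (fun j => ∑ i, j i = 4) = {![1, 1, 2], ![1, 2, 1], ![2, 1, 1]} := by decide
  have h₄ : (Fintype.piFinset fun _ : Fin 4 => Finset.Icc 1 4).filter
      (fun j => ∑ i, j i = 4) = {![1, 1, 1, 1]} := by decide
  rw [compositionSum, show Finset.Icc 2 4 = {2, 3, 4} from rfl, Finset.sum_insert (by decide),
    Finset.sum_pair (by decide), h₂, h₃, h₄, Finset.sum_insert (by decide),
    Finset.sum_pair (by decide), Finset.sum_insert (by decide), Finset.sum_pair (by decide),
    Finset.sum_singleton]
  simp only [Fin.prod_univ_succ, Fin.prod_univ_zero, Matrix.cons_val_zero, Matrix.cons_val_succ]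
  ring

end compositionSum

section Arithmetic

variable {c x B₂ B₃ B₄ y₂ y₃ y₄ : ℝ}

theorem le_const_mul_of_le_two (hc : 0 ≤ c) (hB₂ : 0 ≤ B₂)
    (h₂ : y₂ ≤ B₂ + c * x ^ 2) :
    y₂ ≤ (1 + 20 * (c + c ^ 2 + c ^ 3)) * (B₂ + x ^ 2) := by
  have : 0 ≤ c ^ 2 := by positivity
  have : 0 ≤ c ^ 3 := by positivity
  calc y₂ ≤ 1 * B₂ + c * x ^ 2 := by linarith
    _ ≤ (1 + 20 * (c + c ^ 2 + c ^ 3)) * B₂ + (1 + 20 * (c + c ^ 2 + c ^ 3)) * x ^ 2 := by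
      gcongr ?_ * _ + ?_ * _ <;> linarith
    _ = _ := by ring

theorem le_const_mul_of_le_three (hc : 0 ≤ c) (hx : 0 ≤ x) (hB₂ : 0 ≤ B₂) (hB₃ : 0 ≤ B₃)
    (h₂ : y₂ ≤ B₂ + c * x ^ 2) (h₃ : y₃ ≤ B₃ + c * x ^ 3 + 3 * c * x * y₂) :
    y₃ ≤ (1 + 20 * (c + c ^ 2 + c ^ 3)) * (B₃ + (2 * x * B₂ + x ^ 3)) := by
  have : 0 ≤ c ^ 2 := by positivity
  have : 0 ≤ c ^ 3 := by positivity
  calc y₃ ≤ B₃ + c * x ^ 3 + 3 * c * x * (B₂ + c * x ^ 2) := h₃.trans (by gcongr)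
    _ = 1 * B₃ + 3 / 2 * c * (2 * x * B₂) + (c + 3 * c ^ 2) * x ^ 3 := by ring
    _ ≤ (1 + 20 * (c + c ^ 2 + c ^ 3)) * B₃ + (1 + 20 * (c + c ^ 2 + c ^ 3)) * (2 * x * B₂)
        + (1 + 20 * (c + c ^ 2 + c ^ 3)) * x ^ 3 := by
      gcongr ?_ * _ + ?_ * _ + ?_ * _ <;> linarith
    _ = _ := by ring

theorem le_const_mul_of_le_four (hc : 0 ≤ c) (hx : 0 ≤ x) (hB₂ : 0 ≤ B₂) (hB₃ : 0 ≤ B₃)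
    (hB₄ : 0 ≤ B₄) (hy₂ : 0 ≤ y₂)
    (h₂ : y₂ ≤ B₂ + c * x ^ 2) (h₃ : y₃ ≤ B₃ + c * x ^ 3 + 3 * c * x * y₂)
    (h₄ : y₄ ≤ B₄ + c * x ^ 4 + 6 * c * x ^ 2 * y₂ + 3 * c * y₂ ^ 2 + 4 * c * x * y₃) :
    y₄ ≤ (1 + 20 * (c + c ^ 2 + c ^ 3)) *
      (B₄ + (2 * x * B₃ + B₂ ^ 2 + 3 * x ^ 2 * B₂ + x ^ 4)) := by
  have : 0 ≤ c ^ 2 := by positivity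
  have : 0 ≤ c ^ 3 := by positivity
  calc y₄ ≤ B₄ + c * x ^ 4 + 6 * c * x ^ 2 * (B₂ + c * x ^ 2) + 3 * c * (B₂ + c * x ^ 2) ^ 2
        + 4 * c * x * (B₃ + c * x ^ 3 + 3 * c * x * (B₂ + c * x ^ 2)) :=
          h₄.trans (by gcongr; exact h₃.trans (by gcongr))
    _ = 1 * B₄ + 2 * c * (2 * x * B₃) + 3 * c * B₂ ^ 2 + (2 * c + 6 * c ^ 2) * (3 * x ^ 2 * B₂)
        + (c + 10 * c ^ 2 + 15 * c ^ 3) * x ^ 4 := by ring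
    _ ≤ (1 + 20 * (c + c ^ 2 + c ^ 3)) * B₄ + (1 + 20 * (c + c ^ 2 + c ^ 3)) * (2 * x * B₃)
        + (1 + 20 * (c + c ^ 2 + c ^ 3)) * B₂ ^ 2
        + (1 + 20 * (c + c ^ 2 + c ^ 3)) * (3 * x ^ 2 * B₂)
        + (1 + 20 * (c + c ^ 2 + c ^ 3)) * x ^ 4 := by
      gcongr ?_ * _ + ?_ * _ + ?_ * _ + ?_ * _ + ?_ * _ <;> linarith
    _ = _ := by ring

end Arithmetic

/-- **Trading derivatives through the equation of state.** Given `c₀ > 0`, there is a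
constant `C` depending only on `c₀` such that: for all `f, q : ℝ → ℝ` of class `C⁴` with
`|f^{(k)}(x)| ≤ c₀` and `|f^{(k)}(x)| ≤ c₀ |f'(x)|^k` for all `x` and `1 ≤ k ≤ 4`, setting
`R = f ∘ q`, one has for every `1 ≤ r ≤ 4` and every `t`:
`|f'(q(t)) q^{(r)}(t)| ≤ C (|R^{(r)}(t)| + ∑ |R^{(j₁)}(t)| ⋯ |R^{(j_k)}(t)|)`,
where the sum ranges over `2 ≤ k ≤ r` and tuples of positive integers `j₁ + ⋯ + j_k = r`. -/
theorem eos_derivative_trading (c₀ : ℝ) (hc₀ : 0 < c₀) :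
    ∃ C : ℝ, ∀ f q : ℝ → ℝ, ContDiff ℝ 4 f → ContDiff ℝ 4 q →
      (∀ x : ℝ, ∀ k : ℕ, 1 ≤ k → k ≤ 4 →
        |iteratedDeriv k f x| ≤ c₀ ∧ |iteratedDeriv k f x| ≤ c₀ * |deriv f x| ^ k) →
      ∀ r : ℕ, 1 ≤ r → r ≤ 4 → ∀ t : ℝ,
        |deriv f (q t) * iteratedDeriv r q t| ≤
          C * (|iteratedDeriv r (f ∘ q) t| +
            ∑ k ∈ Finset.Icc 2 r,
              ∑ j ∈ (Fintype.piFinset fun _ : Fin k => Finset.Icc 1 r).filter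
                  (fun j => ∑ i, j i = r),
                ∏ i, |iteratedDeriv (j i) (f ∘ q) t|) := by
  refine ⟨1 + 20 * (c₀ + c₀ ^ 2 + c₀ ^ 3), fun f q hf hq hfq r hr₁ hr₄ t => ?_⟩
  have hF₂ := (hfq (q t) 2 (by norm_num) (by norm_num)).2
  have hF₃ := (hfq (q t) 3 (by norm_num) (by norm_num)).2
  have hF₄ := (hfq (q t) 4 (by norm_num) (by norm_num)).2
  have hR₁ : |iteratedDeriv 1 (f ∘ q) t| = |deriv f (q t) * deriv q t| := by
    rw [iteratedDeriv_one, deriv_comp_eq (hf.differentiable (by norm_num))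
      (hq.differentiable (by norm_num))]
  have hR₂ := congrFun (iteratedDeriv_two_comp (hf.of_le (by norm_num))
    (hq.of_le (by norm_num))) t
  have hR₃ := congrFun (iteratedDeriv_three_comp (hf.of_le (by norm_num))
    (hq.of_le (by norm_num))) t
  have hR₄ := congrFun (iteratedDeriv_four_comp hf hq) t
  have h₂ := abs_mul_le_of_chainRule_two (u₁ := deriv q t) (u₂ := iteratedDeriv 2 q t) hF₂
  have h₃ := abs_mul_le_of_chainRule_three (u₁ := deriv q t) (u₂ := iteratedDeriv 2 q t)
    (u₃ := iteratedDeriv 3 q t) hF₂ hF₃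
  have h₄ := abs_mul_le_of_chainRule_four (u₁ := deriv q t) (u₂ := iteratedDeriv 2 q t)
    (u₃ := iteratedDeriv 3 q t) (u₄ := iteratedDeriv 4 q t) hF₂ hF₃ hF₄
  rw [← hR₂, ← hR₁] at h₂
  rw [← hR₃, ← hR₁] at h₃
  rw [← hR₄, ← hR₁] at h₄
  change _ ≤ _ * (_ + compositionSum (fun j => |iteratedDeriv j (f ∘ q) t|) r)
  interval_cases r
  · rw [compositionSum_one, add_zero, iteratedDeriv_one (f := q), ← hR₁]
    exact le_mul_of_one_le_left (abs_nonneg _) (le_add_of_nonneg_right (by positivity))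
  · rw [compositionSum_two]
    exact le_const_mul_of_le_two hc₀.le (abs_nonneg _) h₂
  · rw [compositionSum_three]
    exact le_const_mul_of_le_three hc₀.le (abs_nonneg _) (abs_nonneg _) (abs_nonneg _) h₂ h₃
  · rw [compositionSum_four]
    exact le_const_mul_of_le_four hc₀.le (abs_nonneg _) (abs_nonneg _) (abs_nonneg _)
      (abs_nonneg _) (abs_nonneg _) h₂ h₃ h₄
end
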